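/- arXiv:2301.04436 — 8 statements merged into one kernel-verified Lean document; each statement's English description precedes it below -/
import Mathlib

section
/- Let Ω ⊆ ℝ² be an open bounded set and f : Ω → ℝ measurable. Suppose there exist constants C > 0, δ ∈ (0,1), and m ≥ 0 (an integer) such that for all λ ≥ 2, |∫_Ω e^{iλ f(x)} dx| ≤ C λ^{-δ} (log λ)^m. Then there is a constant C_δ > 0 such that for all sufficiently small ε ∈ (0,1), the Lebesgue measure of {x ∈ Ω : |f(x)| ≤ ε} is at most C_δ ε^δ |log ε|^m. -/
/-!
Let `G(u) = ∫₀¹ (1 - s) cos (u s) ds = (1 - cos u) / u²`. Then `G ≥ 0` and `G ≥ 1/4` on `[-1, 1]`,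
so `|{|f| ≤ ε}| ≤ 4 ∫_Ω G(f/ε)`. By Fubini the right-hand side is
`4 ∫₀¹ (1 - s) ∫_Ω cos (s f / ε) ds`. For `s ≥ 2ε` the inner integral is the real part of the
oscillatory integral at frequency `λ = s/ε ≥ 2`, hence at most `C ε^δ |log ε|^m s^(-δ)`; for
`s < 2ε` it is at most `|Ω| ≤ |Ω| (2ε)^δ s^(-δ)`. Since `δ < 1`, `s^(-δ)` is integrable on `[0, 1]`.
-/

open MeasureTheory Real Set

-- The `G` above: half the Fejér kernel of `[-1, 1]`, folded onto `[0, 1]` by evenness.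
noncomputable def fejerKernel (u : ℝ) : ℝ := ∫ s in (0:ℝ)..1, (1 - s) * cos (u * s)

lemma fejerKernel_eq_of_ne_zero {u : ℝ} (hu : u ≠ 0) :
    fejerKernel u = (1 - cos u) / u ^ 2 := by
  have hderiv : ∀ s ∈ uIcc (0:ℝ) 1,
      HasDerivAt (fun s => (1 - s) * sin (u * s) / u - cos (u * s) / u ^ 2)
        ((1 - s) * cos (u * s)) s := by
    intro s _
    have hlin : HasDerivAt (fun s : ℝ => u * s) u s := by
      simpa using (hasDerivAt_id s).const_mul u
    have := (((hasDerivAt_id s).const_sub 1).mul ((hasDerivAt_sin _).comp s hlin)).div_const u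
      |>.sub (((hasDerivAt_cos _).comp s hlin).div_const (u ^ 2))
    refine this.congr_deriv ?_
    simp only [Function.comp, id]
    field_simp
    ring
  rw [fejerKernel, intervalIntegral.integral_eq_sub_of_hasDerivAt hderiv
    (Continuous.intervalIntegrable (by fun_prop) _ _)]
  field_simp
  simp
  ring

lemma fejerKernel_nonneg (u : ℝ) : 0 ≤ fejerKernel u := by
  rcases eq_or_ne u 0 with rfl | hu
  · exact intervalIntegral.integral_nonneg zero_le_one fun s hs => by simp [hs.2]
  · rw [fejerKernel_eq_of_ne_zero hu]
    have := cos_le_one u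
    positivity

lemma quarter_le_fejerKernel {u : ℝ} (hu : |u| ≤ 1) : 1 / 4 ≤ fejerKernel u := by
  have hmono : ∫ s in (0:ℝ)..1, (1 - s) / 2 ≤ fejerKernel u := by
    refine intervalIntegral.integral_mono_on zero_le_one
      (Continuous.intervalIntegrable (by fun_prop) _ _)
      (Continuous.intervalIntegrable (by fun_prop) _ _) fun s hs => ?_
    have hus : (u * s) ^ 2 ≤ 1 := by
      rw [mul_pow]
      nlinarith [sq_abs u, hs.1, hs.2, sq_nonneg s, mul_le_one₀ hu (abs_nonneg u) hu]
    have := one_sub_sq_div_two_le_cos (x := u * s)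
    nlinarith [hs.2]
  have hval : ∫ s in (0:ℝ)..1, (1 - s) / 2 = 1 / 4 := by
    rw [intervalIntegral.integral_div, intervalIntegral.integral_sub intervalIntegrable_const
      intervalIntegral.intervalIntegrable_id]
    simp
    norm_num
  linarith

lemma abs_intervalIntegral_one_sub_mul_le {φ : ℝ → ℝ} {A δ : ℝ} (hδ : δ < 1)
    (hφ : ∀ s ∈ Ioc (0:ℝ) 1, |φ s| ≤ A * s ^ (-δ)) :
    |∫ s in (0:ℝ)..1, (1 - s) * φ s| ≤ A / (1 - δ) := by
  have hbound : ∀ s ∈ Ioc (0:ℝ) 1, ‖(1 - s) * φ s‖ ≤ A * s ^ (-δ) := fun s hs => by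
    rw [norm_mul, norm_of_nonneg (sub_nonneg.2 hs.2)]
    exact (mul_le_of_le_one_left (norm_nonneg _) (by linarith [hs.1])).trans (hφ s hs)
  calc |∫ s in (0:ℝ)..1, (1 - s) * φ s|
      ≤ ∫ s in (0:ℝ)..1, A * s ^ (-δ) :=
        intervalIntegral.norm_integral_le_of_norm_le zero_le_one (ae_of_all _ hbound)
          ((intervalIntegral.intervalIntegrable_rpow' (by linarith)).const_mul A)
    _ = A / (1 - δ) := by
        rw [intervalIntegral.integral_const_mul, integral_rpow (Or.inl (by linarith)),
          zero_rpow (by linarith), one_rpow]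
        field_simp
        ring

section
variable {α : Type*} [MeasurableSpace α] {μ : Measure α} [IsFiniteMeasure μ] {g : α → ℝ}

lemma integrable_one_sub_mul_cos_prod (hg : Measurable g) :
    Integrable (Function.uncurry fun x s => (1 - s) * cos (g x * s))
      (μ.prod (volume.restrict (Ioc (0:ℝ) 1))) := by
  refine Integrable.mono' (integrable_const 1) (by fun_prop) ?_
  filter_upwards [Measure.quasiMeasurePreserving_snd.ae (ae_restrict_mem measurableSet_Ioc)]
    with ⟨x, s⟩ ⟨hs0, hs1⟩
  simpa [abs_mul, abs_of_nonneg (sub_nonneg.2 hs1)] using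
    mul_le_one₀ (by linarith) (abs_nonneg _) (abs_cos_le_one (g x * s))

lemma integral_fejerKernel_eq (hg : Measurable g) :
    ∫ x, fejerKernel (g x) ∂μ = ∫ s in (0:ℝ)..1, (1 - s) * ∫ x, cos (g x * s) ∂μ := by
  simp_rw [fejerKernel, intervalIntegral.integral_of_le zero_le_one, ← integral_const_mul]
  exact integral_integral_swap (integrable_one_sub_mul_cos_prod hg)

lemma integrable_fejerKernel_comp (hg : Measurable g) :
    Integrable (fun x => fejerKernel (g x)) μ := by
  simp_rw [fejerKernel, intervalIntegral.integral_of_le zero_le_one]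
  exact (integrable_one_sub_mul_cos_prod hg).integral_prod_left

lemma measureReal_abs_le_le_integral_fejerKernel (hg : Measurable g) {ε : ℝ} (hε : 0 < ε)
    (hG : Integrable (fun x => fejerKernel (g x / ε)) μ) :
    μ.real {x | |g x| ≤ ε} ≤ 4 * ∫ x, fejerKernel (g x / ε) ∂μ := by
  have hS : MeasurableSet {x | |g x| ≤ ε} := measurableSet_le (by fun_prop) measurable_const
  rw [← integral_indicator_one hS, ← integral_const_mul]
  refine integral_mono ((integrable_const 1).indicator hS) (hG.const_mul 4) fun x => ?_
  by_cases hx : |g x| ≤ ε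
  · have : |g x / ε| ≤ 1 := by rwa [abs_div, abs_of_pos hε, div_le_one hε]
    simp [hx]
    linarith [quarter_le_fejerKernel this]
  · simp [hx, fejerKernel_nonneg]

lemma integral_cos_eq_re_integral_exp (hg : Measurable g) (L : ℝ) :
    ∫ x, cos (L * g x) ∂μ = (∫ x, Complex.exp (Complex.I * L * g x) ∂μ).re := by
  have hint : Integrable (fun x => Complex.exp (Complex.I * L * g x)) μ := by
    refine Integrable.mono' (integrable_const 1) (by fun_prop) (ae_of_all _ fun x => ?_)
    simp [Complex.norm_exp]
  rw [← RCLike.re_to_complex, ← integral_re hint]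
  congr 1 with x
  rw [RCLike.re_to_complex, show Complex.I * L * g x = ((L * g x : ℝ) : ℂ) * Complex.I by
    push_cast; ring, Complex.exp_ofReal_mul_I_re]
end

section Oscillatory
variable {α : Type*} [MeasurableSpace α] {μ : Measure α} [IsFiniteMeasure μ] {f : α → ℝ}
  {C δ : ℝ} {m : ℕ}

lemma abs_integral_cos_le_of_two_mul_le
    (hosc : ∀ L : ℝ, 2 ≤ L →
      ‖∫ x, Complex.exp (Complex.I * L * f x) ∂μ‖ ≤ C * L ^ (-δ) * log L ^ m)
    (hf : Measurable f) (hC : 0 ≤ C) {ε s : ℝ}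
    (hε : 0 < ε) (hε1 : ε ≤ 1) (hεs : 2 * ε ≤ s) (hs : s ≤ 1) :
    |∫ x, cos (f x / ε * s) ∂μ| ≤ C * ε ^ δ * |log ε| ^ m * s ^ (-δ) := by
  have hs0 : 0 < s := by linarith
  have hL : 2 ≤ s / ε := (le_div_iff₀ hε).2 (by linarith)
  have hlog : log (s / ε) ≤ |log ε| := by
    rw [log_div hs0.ne' hε.ne', abs_of_nonpos (log_nonpos hε.le hε1)]
    linarith [log_nonpos hs0.le hs]
  have hlog0 : 0 ≤ log (s / ε) := log_nonneg (by linarith)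
  calc |∫ x, cos (f x / ε * s) ∂μ|
      = |(∫ x, Complex.exp (Complex.I * ↑(s / ε) * f x) ∂μ).re| := by
        rw [← integral_cos_eq_re_integral_exp hf]
        congr 2 with x
        ring_nf
    _ ≤ C * (s / ε) ^ (-δ) * log (s / ε) ^ m := (Complex.abs_re_le_norm _).trans (hosc _ hL)
    _ ≤ C * (s / ε) ^ (-δ) * |log ε| ^ m := by gcongr
    _ = C * ε ^ δ * |log ε| ^ m * s ^ (-δ) := by
        rw [div_rpow hs0.le hε.le, rpow_neg hε.le, div_inv_eq_mul]
        ring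

lemma abs_integral_cos_le
    (hosc : ∀ L : ℝ, 2 ≤ L →
      ‖∫ x, Complex.exp (Complex.I * L * f x) ∂μ‖ ≤ C * L ^ (-δ) * log L ^ m)
    (hf : Measurable f) (hC : 0 ≤ C) (hδ : 0 ≤ δ) {ε s : ℝ}
    (hε : 0 < ε) (hε1 : ε ≤ 1) (hs : s ∈ Ioc (0:ℝ) 1) :
    |∫ x, cos (f x / ε * s) ∂μ|
      ≤ (μ.real univ * (2 * ε) ^ δ + C * ε ^ δ * |log ε| ^ m) * s ^ (-δ) := by
  obtain ⟨hs0, hs1⟩ := hs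
  rcases le_or_gt (2 * ε) s with hεs | hsε
  · have := abs_integral_cos_le_of_two_mul_le hosc hf hC hε hε1 hεs hs1
    have : 0 ≤ μ.real univ * (2 * ε) ^ δ * s ^ (-δ) := by positivity
    linarith
  · have htriv : |∫ x, cos (f x / ε * s) ∂μ| ≤ μ.real univ := by
      simpa using norm_integral_le_of_norm_le_const (μ := μ) (C := 1)
        (ae_of_all _ fun x => (norm_eq_abs _).trans_le (abs_cos_le_one (f x / ε * s)))
    have hone : 1 ≤ (2 * ε) ^ δ * s ^ (-δ) := by
      rw [rpow_neg hs0.le, ← div_eq_mul_inv, one_le_div (by positivity)]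
      exact rpow_le_rpow hs0.le hsε.le hδ
    have : 0 ≤ C * ε ^ δ * |log ε| ^ m * s ^ (-δ) := by positivity
    nlinarith [measureReal_nonneg (μ := μ) (s := univ)]

theorem measureReal_abs_le_le_of_norm_integral_exp_le
    (hosc : ∀ L : ℝ, 2 ≤ L →
      ‖∫ x, Complex.exp (Complex.I * L * f x) ∂μ‖ ≤ C * L ^ (-δ) * log L ^ m)
    (hf : Measurable f) (hC : 0 ≤ C) (hδ0 : 0 ≤ δ) (hδ1 : δ < 1) {ε : ℝ} (hε : 0 < ε)
    (hεe : ε ≤ exp (-1)) :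
    μ.real {x | |f x| ≤ ε} ≤ 4 * (2 * μ.real univ + C) / (1 - δ) * ε ^ δ * |log ε| ^ m := by
  have hε1 : ε ≤ 1 := hεe.trans (exp_le_one_iff.2 (by norm_num))
  have hlog : 1 ≤ |log ε| ^ m := by
    refine one_le_pow₀ ?_
    rw [abs_of_nonpos (log_nonpos hε.le hε1)]
    linarith [(log_le_iff_le_exp hε).2 hεe]
  have hconst : μ.real univ * (2 * ε) ^ δ + C * ε ^ δ * |log ε| ^ m
      ≤ (2 * μ.real univ + C) * ε ^ δ * |log ε| ^ m := by
    have h2 : (2 : ℝ) ^ δ ≤ 2 := rpow_le_self_of_one_le (by norm_num) hδ1.le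
    rw [mul_rpow zero_le_two hε.le]
    have : 0 ≤ μ.real univ * ε ^ δ := by positivity
    nlinarith [measureReal_nonneg (μ := μ) (s := univ)]
  have hcos := (le_abs_self _).trans <| (abs_intervalIntegral_one_sub_mul_le hδ1 fun s hs =>
    abs_integral_cos_le hosc hf hC hδ0 hε hε1 hs).trans <|
    div_le_div_of_nonneg_right hconst (by linarith)
  calc μ.real {x | |f x| ≤ ε}
      ≤ 4 * ∫ x, fejerKernel (f x / ε) ∂μ := measureReal_abs_le_le_integral_fejerKernel hf hε
        (integrable_fejerKernel_comp (hf.div_const ε))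
    _ = 4 * ∫ s in (0:ℝ)..1, (1 - s) * ∫ x, cos (f x / ε * s) ∂μ := by
        rw [integral_fejerKernel_eq (hf.div_const ε)]
    _ ≤ 4 * ((2 * μ.real univ + C) * ε ^ δ * |log ε| ^ m / (1 - δ)) :=
        mul_le_mul_of_nonneg_left hcos (by norm_num)
    _ = 4 * (2 * μ.real univ + C) / (1 - δ) * ε ^ δ * |log ε| ^ m := by ring
end Oscillatory

theorem stmt_0_general (Ω : Set (ℝ × ℝ)) (hΩb : Bornology.IsBounded Ω)
    (f : ℝ × ℝ → ℝ) (hf : Measurable f)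
    (C δ : ℝ) (m : ℕ) (hC : 0 < C) (hδ0 : 0 < δ) (hδ1 : δ < 1)
    (hosc : ∀ L : ℝ, 2 ≤ L →
      ‖∫ x in Ω, Complex.exp (Complex.I * L * f x)‖ ≤ C * L ^ (-δ) * (Real.log L) ^ m) :
    ∃ Cδ > 0, ∃ ε₀ ∈ Ioo (0:ℝ) 1, ∀ ε ∈ Ioo (0:ℝ) ε₀,
      (volume {x ∈ Ω | |f x| ≤ ε}).toReal ≤ Cδ * ε ^ δ * |Real.log ε| ^ m := by
  have : IsFiniteMeasure (volume.restrict Ω) :=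
    isFiniteMeasure_restrict.2 hΩb.measure_lt_top.ne
  refine ⟨4 * (2 * (volume.restrict Ω).real univ + C) / (1 - δ), ?_, exp (-1),
    ⟨exp_pos _, exp_lt_one_iff.2 (by norm_num)⟩, fun ε hε => ?_⟩
  · have : 0 < 1 - δ := by linarith
    positivity
  have hset : {x ∈ Ω | |f x| ≤ ε} = {x | |f x| ≤ ε} ∩ Ω := by ext; simp [and_comm]
  rw [hset, ← measureReal_def, ← measureReal_restrict_apply
    (measurableSet_le (by fun_prop) measurable_const)]
  exact measureReal_abs_le_le_of_norm_integral_exp_le hosc hf hC.le hδ0.le hδ1 hε.1 hε.2.le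

theorem stmt_0 (Ω : Set (ℝ × ℝ)) (hΩo : IsOpen Ω) (hΩb : Bornology.IsBounded Ω)
    (f : ℝ × ℝ → ℝ) (hf : Measurable f)
    (C δ : ℝ) (m : ℕ) (hC : 0 < C) (hδ0 : 0 < δ) (hδ1 : δ < 1)
    (hosc : ∀ L : ℝ, 2 ≤ L →
      ‖∫ x in Ω, Complex.exp (Complex.I * L * f x)‖ ≤ C * L ^ (-δ) * (Real.log L) ^ m) :
    ∃ Cδ > 0, ∃ ε₀ ∈ Ioo (0:ℝ) 1, ∀ ε ∈ Ioo (0:ℝ) ε₀,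
      (volume {x ∈ Ω | |f x| ≤ ε}).toReal ≤ Cδ * ε ^ δ * |Real.log ε| ^ m :=
  stmt_0_general Ω hΩb f hf C δ m hC hδ0 hδ1 hosc
end

section
/- Let Ω ⊆ ℝ² be an open bounded set and f : Ω → ℝ measurable. Suppose there exist constants C > 0, δ > 1, and an integer m ≥ 0 such that for all λ ≥ 2, |∫_Ω e^{iλ f(x)} dx| ≤ C λ^{-δ} (log λ)^m. Then there is a constant C' > 0 such that for all sufficiently small ε > 0, the Lebesgue measure of {x ∈ Ω : |f(x)| ≤ ε} is at most C' ε. -/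
/-!
Let `ν` be the push-forward of Lebesgue measure on `Ω` under `f`, so that
`φ(t) = ∫_Ω e^{i t f}` is its characteristic function. The decay `|φ(t)| ≲ t^{-δ} (log t)^m`
with `δ > 1` makes `φ` integrable on `ℝ`. Testing `φ` against the Gaussian `e^{-ε² t² / 4}` and
using Fubini together with the Fourier transform of the Gaussian gives
`∫ φ(t) e^{-ε² t² / 4} dt = (2√π / ε) ∫ e^{-x² / ε²} dν(x) ≥ (2√π / (e ε)) ν [-ε, ε]`,
while the left-hand side is at most `‖φ‖₁`. Hence `ν [-ε, ε] ≤ (e / (2√π)) ‖φ‖₁ ε`.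
-/

open MeasureTheory Real Set Filter Asymptotics

theorem isLittleO_rpow_mul_log_pow_atTop {a b : ℝ} (hab : a < b) (m : ℕ) :
    (fun t : ℝ ↦ t ^ a * log t ^ m) =o[atTop] fun t ↦ t ^ b := by
  have hlog : (fun t : ℝ ↦ log t ^ m) =o[atTop] fun t ↦ t ^ (b - a) := by
    simpa only [rpow_natCast] using isLittleO_log_rpow_rpow_atTop (m : ℝ) (sub_pos.2 hab)
  refine ((isBigO_refl (fun t : ℝ ↦ t ^ a) atTop).mul_isLittleO hlog).trans_eventuallyEq ?_
  filter_upwards [eventually_gt_atTop 0] with t ht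
  rw [← rpow_add ht, add_sub_cancel]

theorem integrable_charFun_of_norm_le_rpow_mul_log_pow {ν : Measure ℝ} [IsFiniteMeasure ν]
    {C δ : ℝ} {m : ℕ} (hδ : 1 < δ)
    (h : ∀ t : ℝ, 2 ≤ t → ‖charFun ν t‖ ≤ C * t ^ (-δ) * log t ^ m) :
    Integrable (charFun ν) := by
  have hdecay : charFun ν =O[atTop] fun t ↦ t ^ (-δ) * log t ^ m := by
    refine IsBigO.of_bound C ?_
    filter_upwards [eventually_ge_atTop 2] with t ht
    have hlog : 0 ≤ log t := log_nonneg (by linarith)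
    rw [norm_of_nonneg (by positivity), ← mul_assoc]
    exact h t ht
  refine continuous_charFun.locallyIntegrable.integrable_of_isBigO_atTop_of_norm_isNegInvariant
    (Eventually.of_forall fun t ↦ ?_)
    (hdecay.trans (isLittleO_rpow_mul_log_pow_atTop (b := -(1 + δ) / 2) (by linarith) m).isBigO)
    (integrableAtFilter_rpow_atTop_iff.2 (by linarith))
  simp [charFun_neg]

section Gaussian

open Complex

theorem integral_charFun_mul_gaussian {ν : Measure ℝ} [IsFiniteMeasure ν] {b : ℝ} (hb : 0 < b) :
    ∫ t : ℝ, charFun ν t * cexp (-b * t ^ 2) = ∫ x, √(π / b) * rexp (-x ^ 2 / (4 * b)) ∂ν := by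
  have hint : Integrable (Function.uncurry fun (t x : ℝ) ↦ cexp (t * x * I) * cexp (-b * t ^ 2))
      (volume.prod ν) := by
    refine ((integrable_exp_neg_mul_sq hb).mul_prod (integrable_const (1 : ℝ))).mono'
      (by fun_prop) (Eventually.of_forall fun p ↦ le_of_eq ?_)
    rw [← Prod.mk.eta (p := p), Function.uncurry_apply_pair, norm_mul, ← ofReal_mul,
      norm_exp_ofReal_mul_I, ← ofReal_pow, ← ofReal_neg, ← ofReal_mul, norm_exp_ofReal]
    simp
  have hfourier (x : ℝ) : ∫ t : ℝ, cexp (t * x * I) * cexp (-b * t ^ 2)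
      = ↑(√(π / b) * rexp (-x ^ 2 / (4 * b))) := by
    have hsqrt : ((π : ℂ) / b) ^ (1 / 2 : ℂ) = ↑√(π / b) := by
      rw [sqrt_eq_rpow, ofReal_cpow (by positivity)]
      push_cast
      ring_nf
    have hexp : -(x : ℂ) ^ 2 / (4 * b) = ((-x ^ 2 / (4 * b) : ℝ) : ℂ) := by push_cast; ring
    calc ∫ t : ℝ, cexp (t * x * I) * cexp (-b * t ^ 2)
        = ∫ t : ℝ, cexp (I * x * t) * cexp (-b * t ^ 2) := by congr with t; ring_nf
      _ = _ := by
        rw [fourierIntegral_gaussian (by simpa using hb), hsqrt, hexp, ofReal_mul, ofReal_exp]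
  calc ∫ t : ℝ, charFun ν t * cexp (-b * t ^ 2)
      = ∫ t : ℝ, ∫ x, cexp (t * x * I) * cexp (-b * t ^ 2) ∂ν := by
        simp_rw [charFun_apply_real, integral_mul_const]
    _ = ∫ x : ℝ, (∫ t : ℝ, cexp (t * x * I) * cexp (-b * t ^ 2)) ∂ν :=
        integral_integral_swap hint
    _ = _ := by simp_rw [hfourier]; exact integral_ofReal

theorem measureReal_Icc_le_of_integrable_charFun {ν : Measure ℝ} [IsFiniteMeasure ν]
    (hν : Integrable (charFun ν)) {ε : ℝ} (hε : 0 < ε) :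
    ν.real (Icc (-ε) ε) ≤ rexp 1 / (2 * √π) * (∫ t, ‖charFun ν t‖) * ε := by
  set b := ε ^ 2 / 4
  have hb : 0 < b := by positivity
  set G : ℝ → ℝ := fun x ↦ √(π / b) * rexp (-x ^ 2 / (4 * b))
  have hsqrt : √(π / b) = 2 * √π / ε := by
    rw [sqrt_div' _ hb.le, sqrt_div' _ (by norm_num : (0 : ℝ) ≤ 4), sqrt_sq hε.le,
      show √(4 : ℝ) = 2 by rw [show (4 : ℝ) = 2 ^ 2 by norm_num, sqrt_sq zero_le_two]]
    field_simp
  have hG_int : Integrable G ν := by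
    refine Integrable.of_bound (by fun_prop) (√(π / b)) (Eventually.of_forall fun x ↦ ?_)
    rw [norm_of_nonneg (by positivity)]
    refine mul_le_of_le_one_right (sqrt_nonneg _) (exp_le_one_iff.2 ?_)
    rw [neg_div]
    exact neg_nonpos.2 (by positivity)
  have hlower : √(π / b) * rexp (-1) * ν.real (Icc (-ε) ε) ≤ ∫ x, G x ∂ν := by
    refine (setIntegral_ge_of_const_le_real measurableSet_Icc (measure_ne_top _ _)
      (fun x hx ↦ ?_) hG_int.integrableOn).trans
      (setIntegral_le_integral hG_int (Eventually.of_forall fun x ↦ by positivity))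
    refine mul_le_mul_of_nonneg_left (exp_le_exp.2 ?_) (sqrt_nonneg _)
    rw [show 4 * b = ε ^ 2 by ring, neg_div, neg_le_neg_iff, div_le_one (by positivity)]
    exact sq_le_sq' hx.1 hx.2
  have hupper : ∫ x, G x ∂ν ≤ ∫ t, ‖charFun ν t‖ := by
    calc ∫ x, G x ∂ν ≤ ‖((∫ x, G x ∂ν : ℝ) : ℂ)‖ := by
          rw [Complex.norm_real, norm_eq_abs]; exact le_abs_self _
      _ = ‖∫ t : ℝ, charFun ν t * cexp (-b * t ^ 2)‖ := by rw [integral_charFun_mul_gaussian hb]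
      _ ≤ ∫ t, ‖charFun ν t‖ := by
          refine norm_integral_le_of_norm_le hν.norm (Eventually.of_forall fun t ↦ ?_)
          rw [norm_mul, Complex.norm_exp]
          refine mul_le_of_le_one_right (norm_nonneg _) (exp_le_one_iff.2 ?_)
          rw [← ofReal_pow, ← ofReal_neg, ← ofReal_mul, ofReal_re, neg_mul]
          exact neg_nonpos.2 (by positivity)
  rw [hsqrt] at hlower
  have hpi : 0 < √π := sqrt_pos.2 pi_pos
  calc ν.real (Icc (-ε) ε)
      = rexp 1 / (2 * √π) * ε * (2 * √π / ε * rexp (-1) * ν.real (Icc (-ε) ε)) := by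
        rw [Real.exp_neg]; field_simp
    _ ≤ rexp 1 / (2 * √π) * ε * ∫ t, ‖charFun ν t‖ := by gcongr; exact hlower.trans hupper
    _ = _ := by ring

end Gaussian

theorem stmt_1_general (Ω : Set (ℝ × ℝ)) (hΩb : Bornology.IsBounded Ω)
    (f : ℝ × ℝ → ℝ) (hf : Measurable f)
    (C δ : ℝ) (m : ℕ) (hδ : 1 < δ)
    (hosc : ∀ L : ℝ, 2 ≤ L →
      ‖∫ x in Ω, Complex.exp (Complex.I * L * f x)‖ ≤ C * L ^ (-δ) * (Real.log L) ^ m) :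
    ∃ C' > 0, ∃ ε₀ > (0:ℝ), ∀ ε ∈ Ioo (0:ℝ) ε₀,
      (volume {x ∈ Ω | |f x| ≤ ε}).toReal ≤ C' * ε := by
  have : IsFiniteMeasure (volume.restrict Ω) :=
    isFiniteMeasure_restrict.2 hΩb.measure_lt_top.ne
  set ν := (volume.restrict Ω).map f
  have hchar (t : ℝ) : charFun ν t = ∫ x in Ω, Complex.exp (Complex.I * t * f x) := by
    rw [charFun_apply_real, integral_map hf.aemeasurable (by fun_prop)]
    congr with x
    ring_nf
  have hν : Integrable (charFun ν) :=
    integrable_charFun_of_norm_le_rpow_mul_log_pow hδ fun t ht ↦ hchar t ▸ hosc t ht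
  have hlevel (ε : ℝ) : volume {x ∈ Ω | |f x| ≤ ε} = ν (Icc (-ε) ε) := by
    rw [Measure.map_apply hf measurableSet_Icc, Measure.restrict_apply (hf measurableSet_Icc)]
    congr 1
    ext x
    simp only [mem_sep_iff, mem_inter_iff, mem_preimage, mem_Icc, abs_le]
    tauto
  refine ⟨rexp 1 / (2 * √π) * (∫ t, ‖charFun ν t‖) + 1, by positivity, 1, one_pos,
    fun ε hε ↦ ?_⟩
  rw [hlevel, ← measureReal_def]
  exact (measureReal_Icc_le_of_integrable_charFun hν hε.1).trans
    (mul_le_mul_of_nonneg_right (le_add_of_nonneg_right zero_le_one) hε.1.le)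

theorem stmt_1 (Ω : Set (ℝ × ℝ)) (hΩo : IsOpen Ω) (hΩb : Bornology.IsBounded Ω)
    (f : ℝ × ℝ → ℝ) (hf : Measurable f)
    (C δ : ℝ) (m : ℕ) (hC : 0 < C) (hδ : 1 < δ)
    (hosc : ∀ L : ℝ, 2 ≤ L →
      ‖∫ x in Ω, Complex.exp (Complex.I * L * f x)‖ ≤ C * L ^ (-δ) * (Real.log L) ^ m) :
    ∃ C' > 0, ∃ ε₀ > (0:ℝ), ∀ ε ∈ Ioo (0:ℝ) ε₀,
      (volume {x ∈ Ω | |f x| ≤ ε}).toReal ≤ C' * ε :=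
  stmt_1_general Ω hΩb f hf C δ m hδ hosc
end

section
/- For every real δ with 0 < δ < 1 and every nonnegative integer m, there is a constant C > 0 such that for all ε ∈ (0, 1/2), ∫_0^∞ ε |log η|^m / ((1 + εη)(2 + η)^δ) dη ≤ C ε^δ |log ε|^m. -/
open MeasureTheory Real Set

open scoped Nat

/-!
Substituting `t = ε η` and using `(2 + η)^δ ≥ η^δ = ε^(-δ) t^δ` bounds the integral by
`ε^δ ∫₀^∞ |log t - log ε|^m / ((1 + t) t^δ) dt`. Since `|log ε| ≥ log 2`, the numerator is at most
`((1 + |log t|) |log ε| / log 2)^m`, so it remains to see that the weight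
`(1 + |log t|)^m / ((1 + t) t^δ)` is integrable on `(0, ∞)`: the factor `(1 + |log t|)^m` is
`O(t^a + t^(-a))` for every `a > 0`, and `t^(±a - δ) / (1 + t)` is integrable once
`a < min δ (1 - δ)`.
-/

lemma integrableOn_rpow_div_one_add_Ioi {a : ℝ} (ha₁ : -1 < a) (ha₀ : a < 0) :
    IntegrableOn (fun t : ℝ => t ^ a / (1 + t)) (Ioi 0) := by
  have hmeas : AEStronglyMeasurable (fun t : ℝ => t ^ a / (1 + t)) :=
    (by fun_prop : Measurable fun t : ℝ => t ^ a / (1 + t)).aestronglyMeasurable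
  rw [← Ioc_union_Ioi_eq_Ioi zero_le_one]
  refine IntegrableOn.union ?_ ?_
  · refine (Iff.mpr integrableOn_Ioc_iff_integrableOn_Ioo
      ((intervalIntegral.integrableOn_Ioo_rpow_iff one_pos).mpr ha₁)).mono' hmeas.restrict ?_
    filter_upwards [ae_restrict_mem measurableSet_Ioc] with t ht
    have ht₀ : 0 < t := ht.1
    rw [norm_of_nonneg (by positivity)]
    exact div_le_self (rpow_nonneg ht₀.le a) (by linarith)
  · refine (integrableOn_Ioi_rpow_of_lt (by linarith : a - 1 < -1) one_pos).mono'
      hmeas.restrict ?_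
    filter_upwards [ae_restrict_mem measurableSet_Ioi] with t ht
    have ht₀ : 0 < t := one_pos.trans ht
    rw [norm_of_nonneg (by positivity), rpow_sub_one ht₀.ne']
    exact div_le_div_of_nonneg_left (by positivity) ht₀ (by linarith)

lemma one_add_pow_le_mul_exp {a u : ℝ} (ha : 0 < a) (hu : 0 ≤ u) (m : ℕ) :
    (1 + u) ^ m ≤ m ! * exp a / a ^ m * exp (a * u) := by
  have h := pow_div_factorial_le_exp (a * (1 + u)) (by positivity) m
  rw [mul_pow, mul_add, mul_one, exp_add, div_le_iff₀ (by positivity)] at h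
  rw [div_mul_eq_mul_div, le_div_iff₀ (by positivity)]
  linarith

lemma exp_mul_abs_log_le {t : ℝ} (ht : 0 < t) (a : ℝ) :
    exp (a * |log t|) ≤ t ^ a + t ^ (-a) := by
  have h₁ := rpow_pos_of_pos ht a
  have h₂ := rpow_pos_of_pos ht (-a)
  rcases abs_cases (log t) with ⟨h, -⟩ | ⟨h, -⟩
  · rw [h, mul_comm, ← rpow_def_of_pos ht]
    linarith
  · rw [h, mul_neg, ← neg_mul, mul_comm, ← rpow_def_of_pos ht]
    linarith

noncomputable def logWeight (δ : ℝ) (m : ℕ) (t : ℝ) : ℝ :=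
  (1 + |log t|) ^ m / ((1 + t) * t ^ δ)

lemma logWeight_nonneg (δ : ℝ) (m : ℕ) {t : ℝ} (ht : 0 ≤ t) : 0 ≤ logWeight δ m t := by
  unfold logWeight
  positivity

lemma integrableOn_logWeight {δ : ℝ} (hδ₀ : 0 < δ) (hδ₁ : δ < 1) (m : ℕ) :
    IntegrableOn (logWeight δ m) (Ioi 0) := by
  set a := min δ (1 - δ) / 2 with ha_def
  have ha : 0 < a := by positivity
  have haδ : a < δ := by linarith [min_le_left δ (1 - δ)]
  have haδ' : a < 1 - δ := by linarith [min_le_right δ (1 - δ)]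
  set K := m ! * exp a / a ^ m
  have hdom : IntegrableOn (fun t => K * (t ^ (a - δ) / (1 + t) + t ^ (-a - δ) / (1 + t)))
      (Ioi 0) :=
    ((integrableOn_rpow_div_one_add_Ioi (by linarith) (by linarith)).add
      (integrableOn_rpow_div_one_add_Ioi (by linarith) (by linarith))).const_mul K
  refine hdom.mono'
    (by unfold logWeight; fun_prop : Measurable _).aestronglyMeasurable.restrict ?_
  filter_upwards [ae_restrict_mem measurableSet_Ioi] with t (ht : 0 < t)
  rw [norm_of_nonneg (logWeight_nonneg δ m ht.le)]
  calc logWeight δ m t ≤ K * (t ^ a + t ^ (-a)) / ((1 + t) * t ^ δ) := by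
        unfold logWeight
        gcongr
        exact (one_add_pow_le_mul_exp ha (abs_nonneg _) m).trans
          (mul_le_mul_of_nonneg_left (exp_mul_abs_log_le ht a) (by positivity))
    _ = _ := by
        rw [rpow_sub ht, rpow_sub ht]
        field_simp

lemma log_two_le_abs_log {ε : ℝ} (hε₀ : 0 < ε) (hε : ε ≤ 1 / 2) : log 2 ≤ |log ε| := by
  rw [abs_of_neg (log_neg hε₀ (by linarith)), ← log_inv]
  exact log_le_log two_pos (by rw [le_inv_comm₀ two_pos hε₀]; linarith)

lemma abs_log_le_one_add_abs_log_mul {ε η : ℝ} (hε : 0 < ε) (hη : 0 < η)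
    (hL : log 2 ≤ |log ε|) :
    |log η| ≤ (1 + |log (ε * η)|) * (|log ε| / log 2) := by
  have hlog2 : 0 < log 2 := log_pos one_lt_two
  have h₁ : 1 ≤ |log ε| / log 2 := (one_le_div hlog2).mpr hL
  have h₂ : |log ε| ≤ |log ε| / log 2 :=
    le_div_self (abs_nonneg _) hlog2 (by linarith [log_two_lt_d9])
  calc |log η| = |log (ε * η) - log ε| := by rw [log_mul hε.ne' hη.ne', add_sub_cancel_left]
    _ ≤ |log (ε * η)| + |log ε| := abs_sub _ _
    _ ≤ _ := by nlinarith [abs_nonneg (log (ε * η))]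

lemma integrand_le_logWeight {δ ε η : ℝ} (hδ : 0 ≤ δ) (m : ℕ) (hε : 0 < ε) (hη : 0 < η)
    (hL : log 2 ≤ |log ε|) :
    ε * |log η| ^ m / ((1 + ε * η) * (2 + η) ^ δ)
      ≤ ε ^ δ * (|log ε| / log 2) ^ m * (ε * logWeight δ m (ε * η)) := by
  have hden : (ε * η) ^ δ / ε ^ δ ≤ (2 + η) ^ δ := by
    rw [mul_rpow hε.le hη.le, mul_div_cancel_left₀ _ (rpow_pos_of_pos hε δ).ne']
    exact rpow_le_rpow hη.le (by linarith) hδ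
  calc ε * |log η| ^ m / ((1 + ε * η) * (2 + η) ^ δ)
      ≤ ε * ((1 + |log (ε * η)|) * (|log ε| / log 2)) ^ m
          / ((1 + ε * η) * ((ε * η) ^ δ / ε ^ δ)) := by
        gcongr
        exact abs_log_le_one_add_abs_log_mul hε hη hL
    _ = _ := by
        unfold logWeight
        rw [mul_pow]
        field_simp

theorem stmt_3 (δ : ℝ) (hδ0 : 0 < δ) (hδ1 : δ < 1) (m : ℕ) :
    ∃ C > 0, ∀ ε ∈ Ioo (0:ℝ) (1/2),
      ∫ η in Ioi (0:ℝ), ε * |Real.log η| ^ m / ((1 + ε * η) * (2 + η) ^ δ)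
        ≤ C * ε ^ δ * |Real.log ε| ^ m := by
  have hw := integrableOn_logWeight hδ0 hδ1 m
  set W := ∫ t in Ioi (0:ℝ), logWeight δ m t
  have hW : 0 ≤ W :=
    setIntegral_nonneg measurableSet_Ioi fun t ht => logWeight_nonneg δ m (le_of_lt ht)
  refine ⟨W / log 2 ^ m + 1, by positivity, fun ε ⟨hε₀, hε⟩ => ?_⟩
  have hL := log_two_le_abs_log hε₀ hε.le
  have hscaled_int : IntegrableOn (fun η => ε * logWeight δ m (ε * η)) (Ioi 0) :=
    ((integrableOn_Ioi_comp_mul_left_iff (logWeight δ m) 0 hε₀).mpr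
      (by rw [mul_zero]; exact hw)).const_mul ε
  have hscaled : ∫ η in Ioi 0, ε * logWeight δ m (ε * η) = W := by
    rw [integral_const_mul, integral_comp_mul_left_Ioi _ _ hε₀, mul_zero, smul_eq_mul,
      mul_inv_cancel_left₀ hε₀.ne']
  calc _ ≤ ∫ η in Ioi 0, ε ^ δ * (|log ε| / log 2) ^ m * (ε * logWeight δ m (ε * η)) := by
        refine integral_mono_of_nonneg ?_ (hscaled_int.const_mul _) ?_ <;>
          filter_upwards [ae_restrict_mem measurableSet_Ioi] with η (hη : 0 < η)
        · positivity
        · exact integrand_le_logWeight hδ0.le m hε₀ hη hL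
    _ = W / log 2 ^ m * ε ^ δ * |log ε| ^ m := by
        rw [integral_const_mul, hscaled]
        ring
    _ ≤ _ := by gcongr; linarith
end

section
/- For every nonnegative integer m there is a constant C > 0 such that for all ε ∈ (0, 1/2), ∫_0^∞ ε |log η|^m / ((1 + εη)(1 + η)) dη ≤ C ε |log ε|^{m+1}. -/
open MeasureTheory Real Set

lemma logpow_le (m : ℕ) {x : ℝ} (hx : 1 ≤ x) :
    (Real.log x) ^ m ≤ (2*m) ^ m * x ^ ((1:ℝ)/2) := by
  have hx0 : 0 < x := lt_of_lt_of_le one_pos hx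
  rcases Nat.eq_zero_or_pos m with hm | hm
  · subst hm
    simpa using Real.one_le_rpow hx (by norm_num)
  · have hmR : (0:ℝ) < (m:ℝ) := by exact_mod_cast hm
    have key : Real.log x ≤ 2*m * x ^ ((1:ℝ)/(2*m)) := by
      have h1 : Real.log (x ^ ((1:ℝ)/(2*m))) = (1/(2*m)) * Real.log x :=
        Real.log_rpow hx0 _
      have h2 : Real.log (x ^ ((1:ℝ)/(2*m))) ≤ x ^ ((1:ℝ)/(2*m)) := by
        have := Real.log_le_sub_one_of_pos (Real.rpow_pos_of_pos hx0 ((1:ℝ)/(2*m)))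
        linarith
      have h3 : (1/(2*(m:ℝ))) * Real.log x ≤ x ^ ((1:ℝ)/(2*m)) := h1 ▸ h2
      have h4 : (0:ℝ) < 2*(m:ℝ) := by linarith
      calc Real.log x = 2*m * ((1/(2*(m:ℝ))) * Real.log x) := by field_simp
        _ ≤ 2*m * x ^ ((1:ℝ)/(2*m)) := by
            exact mul_le_mul_of_nonneg_left h3 (by linarith)
    have hlog0 : 0 ≤ Real.log x := Real.log_nonneg hx
    calc (Real.log x) ^ m ≤ (2*m * x ^ ((1:ℝ)/(2*m))) ^ m :=
          pow_le_pow_left₀ hlog0 key m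
      _ = (2*m)^m * (x ^ ((1:ℝ)/(2*m)))^m := mul_pow _ _ _
      _ = (2*m)^m * x ^ ((1:ℝ)/2) := by
          rw [← Real.rpow_natCast (x ^ ((1:ℝ)/(2*m))) m, ← Real.rpow_mul hx0.le]
          congr 1
          have h5 : (1:ℝ)/(2*(m:ℝ)) * (m:ℝ) = 1/2 := by
            field_simp
          rw [h5]

theorem stmt_5 (m : ℕ) :
    ∃ C > 0, ∀ ε ∈ Ioo (0:ℝ) (1/2),
      ∫ η in Ioi (0:ℝ), ε * |Real.log η| ^ m / ((1 + ε * η) * (1 + η))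
        ≤ C * ε * |Real.log ε| ^ (m + 1) := by
  refine ⟨2^(m+2)*(2*m)^m + 1 + 2^(m+1) + 2^(2*m+2)*(2*m)^m, by positivity, ?_⟩
  rintro ε ⟨hε0, hε2⟩
  set f : ℝ → ℝ := fun η => ε * |Real.log η| ^ m / ((1 + ε * η) * (1 + η)) with hfdef
  set L : ℝ := |Real.log ε| with hLdef
  have hlogε : Real.log ε < 0 := Real.log_neg hε0 (by linarith)
  have hLeq : L = -Real.log ε := abs_of_neg hlogε
  have hL : (1:ℝ)/2 < L := by
    have h2 : (0.6931471803:ℝ) < Real.log 2 := Real.log_two_gt_d9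
    have h3 : Real.log ε < Real.log (1/2) := Real.log_lt_log hε0 hε2
    have h4 : Real.log (1/2 : ℝ) = -Real.log 2 := by
      rw [one_div, Real.log_inv]
    rw [hLeq]; rw [h4] at h3; linarith
  have hL0 : 0 < L := by linarith
  have hp1 : (1:ℝ) ≤ 2^(m+1) * L^(m+1) := by
    have : (1:ℝ) ≤ (2*L)^(m+1) := one_le_pow₀ (by linarith)
    rwa [mul_pow] at this
  have hp2 : L^m ≤ 2 * L^(m+1) := by
    have h := mul_le_mul_of_nonneg_left (show (1:ℝ) ≤ 2*L by linarith)
      (pow_nonneg hL0.le m)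
    calc L^m = L^m * 1 := (mul_one _).symm
      _ ≤ L^m * (2*L) := h
      _ = 2 * L^(m+1) := by ring
  have hinv0 : (0:ℝ) < ε⁻¹ := inv_pos.2 hε0
  have hinv1 : (1:ℝ) ≤ ε⁻¹ := by
    rw [le_inv_comm₀ one_pos hε0]; simpa using hε2.le.trans (by norm_num)
  -- measurability
  have hmeas : Measurable f := by
    apply Measurable.div
    · exact measurable_const.mul ((Real.measurable_log.abs).pow_const m)
    · exact ((measurable_const.add (measurable_const.mul measurable_id)).mul
        (measurable_const.add measurable_id))
  have hf_nonneg : ∀ η : ℝ, 0 < η → 0 ≤ f η := by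
    intro η hη
    apply div_nonneg (by positivity)
    have h1 : (0:ℝ) < 1 + ε * η := by nlinarith
    have h2 : (0:ℝ) < 1 + η := by linarith
    positivity
  -- dominating functions
  set gA : ℝ → ℝ := fun η => ε * (2*m)^m * η ^ (-(1:ℝ)/2) with hgA
  set gB : ℝ → ℝ := fun η => ε * L^m * η⁻¹ with hgB
  set gC : ℝ → ℝ := fun η =>
    2^m * L^m * η ^ (-(2:ℝ)) + 2^m * (2*m)^m * ε^((1:ℝ)/2) * η ^ (-(3:ℝ)/2) with hgC
  -- pointwise bounds
  have hbA : ∀ η ∈ Ioc (0:ℝ) 1, f η ≤ gA η := by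
    rintro η ⟨hη0, hη1⟩
    have hD : (1:ℝ) ≤ (1 + ε * η) * (1 + η) := by
      nlinarith [mul_pos hε0 hη0, mul_pos (mul_pos hε0 hη0) hη0]
    have h1 : f η ≤ ε * |Real.log η| ^ m :=
      div_le_self (by positivity) hD
    have hlog : |Real.log η| = Real.log η⁻¹ := by
      rw [Real.log_inv, abs_of_nonpos (Real.log_nonpos hη0.le hη1)]
    have h2 : |Real.log η| ^ m ≤ (2*m)^m * η ^ (-(1:ℝ)/2) := by
      rw [hlog]
      have h3 := logpow_le m (show (1:ℝ) ≤ η⁻¹ from (one_le_inv_iff₀.2 ⟨hη0, hη1⟩))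
      have h4 : (η⁻¹ : ℝ) ^ ((1:ℝ)/2) = η ^ (-(1:ℝ)/2) := by
        rw [← Real.rpow_neg_one η, ← Real.rpow_mul hη0.le]
        norm_num
      rwa [h4] at h3
    calc f η ≤ ε * |Real.log η| ^ m := h1
      _ ≤ ε * ((2*m)^m * η ^ (-(1:ℝ)/2)) := by
          exact mul_le_mul_of_nonneg_left h2 hε0.le
      _ = gA η := by rw [hgA]; ring
  have hbB : ∀ η ∈ Ioc (1:ℝ) ε⁻¹, f η ≤ gB η := by
    rintro η ⟨hη1, hη2⟩
    have hη0 : (0:ℝ) < η := by linarith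
    have hDη : η ≤ (1 + ε * η) * (1 + η) := by
      nlinarith [mul_pos hε0 hη0, mul_pos (mul_pos hε0 hη0) hη0]
    have hnum : |Real.log η| ^ m ≤ L ^ m := by
      apply pow_le_pow_left₀ (abs_nonneg _)
      rw [abs_of_nonneg (Real.log_nonneg hη1.le), hLeq, ← Real.log_inv]
      exact Real.log_le_log hη0 hη2
    have h1 : f η ≤ ε * L^m / η := by
      apply div_le_div₀ (by positivity) (mul_le_mul_of_nonneg_left hnum hε0.le) hη0 hDη
    calc f η ≤ ε * L^m / η := h1
      _ = gB η := by rw [hgB, div_eq_mul_inv]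
  have hbC : ∀ η ∈ Ioi ε⁻¹, f η ≤ gC η := by
    intro η hη
    have hη' : ε⁻¹ < η := hη
    have hη1 : (1:ℝ) < η := lt_of_le_of_lt hinv1 hη'
    have hη0 : (0:ℝ) < η := by linarith
    have hεη : (1:ℝ) < ε * η := by
      calc (1:ℝ) = ε * ε⁻¹ := by field_simp
        _ < ε * η := by exact mul_lt_mul_of_pos_left hη' hε0
    have hD : (ε * η) * η ≤ (1 + ε * η) * (1 + η) := by
      nlinarith [mul_pos hε0 hη0]
    have habs : |Real.log η| = Real.log η := abs_of_nonneg (Real.log_nonneg hη1.le)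
    have hsplit : Real.log η = L + Real.log (ε * η) := by
      have he : η = ε⁻¹ * (ε * η) := by field_simp
      calc Real.log η = Real.log (ε⁻¹ * (ε * η)) := by rw [← he]
        _ = Real.log ε⁻¹ + Real.log (ε * η) :=
            Real.log_mul (by positivity) (by positivity)
        _ = L + Real.log (ε * η) := by rw [Real.log_inv, ← hLeq]
    set b : ℝ := Real.log (ε * η) with hbdef
    have hb0 : 0 ≤ b := Real.log_nonneg hεη.le
    -- (L + b)^m ≤ 2^m * (L^m + b^m)
    have hsum : (L + b) ^ m ≤ 2^m * (L^m + b^m) := by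
      have h1 : L + b ≤ 2 * max L b := by
        rcases le_total L b with h | h
        · rw [max_eq_right h]; linarith
        · rw [max_eq_left h]; linarith
      have h2 : (L + b) ^ m ≤ (2 * max L b) ^ m :=
        pow_le_pow_left₀ (by positivity) h1 m
      have h3 : (max L b) ^ m ≤ L^m + b^m := by
        rcases le_total L b with h | h
        · rw [max_eq_right h]
          exact le_add_of_nonneg_left (pow_nonneg hL0.le m)
        · rw [max_eq_left h]
          exact le_add_of_nonneg_right (pow_nonneg hb0 m)
      calc (L + b) ^ m ≤ (2 * max L b) ^ m := h2
        _ = 2^m * (max L b)^m := mul_pow _ _ _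
        _ ≤ 2^m * (L^m + b^m) := by
            exact mul_le_mul_of_nonneg_left h3 (by positivity)
    have hbm : b ^ m ≤ (2*m)^m * (ε * η) ^ ((1:ℝ)/2) := logpow_le m hεη.le
    have hnum : |Real.log η| ^ m ≤ 2^m * (L^m + (2*m)^m * (ε * η) ^ ((1:ℝ)/2)) := by
      rw [habs, hsplit]
      calc (L + b) ^ m ≤ 2^m * (L^m + b^m) := hsum
        _ ≤ 2^m * (L^m + (2*m)^m * (ε * η) ^ ((1:ℝ)/2)) := by
            exact mul_le_mul_of_nonneg_left (by linarith) (by positivity)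
    have hstep1 : f η ≤ ε * (2^m * (L^m + (2*m)^m * (ε * η) ^ ((1:ℝ)/2))) / ((ε * η) * η) :=
      div_le_div₀ (by positivity) (mul_le_mul_of_nonneg_left hnum hε0.le)
        (by positivity) hD
    have hcanc : ε * (2^m * (L^m + (2*m)^m * (ε * η) ^ ((1:ℝ)/2))) / ((ε * η) * η)
        = (2^m * (L^m + (2*m)^m * (ε * η) ^ ((1:ℝ)/2))) / (η * η) := by
      rw [show (ε * η) * η = ε * (η * η) by ring]
      exact mul_div_mul_left _ _ hε0.ne'
    -- rewrite gC
    have e1 : η ^ (-(2:ℝ)) = (η * η)⁻¹ := by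
      rw [Real.rpow_neg hη0.le]
      congr 1
      rw [show (2:ℝ) = ((2:ℕ):ℝ) by norm_num, Real.rpow_natCast]
      ring
    have e2 : ε^((1:ℝ)/2) * η ^ (-(3:ℝ)/2) = (ε * η) ^ ((1:ℝ)/2) * (η * η)⁻¹ := by
      rw [Real.mul_rpow hε0.le hη0.le, mul_assoc]
      congr 1
      rw [← e1, ← Real.rpow_add hη0]
      norm_num
    have hgCeq : gC η = (2^m * (L^m + (2*m)^m * (ε * η) ^ ((1:ℝ)/2))) / (η * η) := by
      rw [hgC]
      simp only
      have e2' : 2 ^ m * (2 * (m:ℝ)) ^ m * ε ^ ((1:ℝ)/2) * η ^ (-(3:ℝ)/2)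
          = 2 ^ m * (2 * (m:ℝ)) ^ m * ((ε * η) ^ ((1:ℝ)/2) * η ^ (-(2:ℝ))) := by
        rw [e1, ← e2]; ring
      rw [e2', e1,
        div_eq_mul_inv (2 ^ m * (L ^ m + (2 * (m:ℝ)) ^ m * (ε * η) ^ ((1:ℝ)/2))) (η*η)]
      ring
    rw [hgCeq]
    calc f η ≤ ε * (2^m * (L^m + (2*m)^m * (ε * η) ^ ((1:ℝ)/2))) / ((ε * η) * η) := hstep1
      _ = (2^m * (L^m + (2*m)^m * (ε * η) ^ ((1:ℝ)/2))) / (η * η) := hcanc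
  -- integrability of the dominating functions
  have hIgA : IntegrableOn gA (Ioc (0:ℝ) 1) := by
    have h := intervalIntegral.intervalIntegrable_rpow'
      (show (-1:ℝ) < -(1:ℝ)/2 by norm_num) (a := (0:ℝ)) (b := 1)
    rw [intervalIntegrable_iff_integrableOn_Ioc_of_le zero_le_one] at h
    exact h.const_mul (ε * (2*m)^m)
  have hIgB : IntegrableOn gB (Ioc (1:ℝ) ε⁻¹) := by
    have h : IntervalIntegrable (fun x:ℝ => x⁻¹) volume 1 ε⁻¹ := by
      apply intervalIntegral.intervalIntegrable_inv (f := fun x : ℝ => x)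
      · intro x hx
        rw [Set.uIcc_of_le hinv1] at hx
        exact ne_of_gt (lt_of_lt_of_le one_pos hx.1)
      · exact continuousOn_id
    rw [intervalIntegrable_iff_integrableOn_Ioc_of_le hinv1] at h
    exact h.const_mul (ε * L^m)
  have hIgC : IntegrableOn gC (Ioi ε⁻¹) := by
    apply Integrable.add
    · exact (integrableOn_Ioi_rpow_of_lt (by norm_num) hinv0).const_mul _
    · exact (integrableOn_Ioi_rpow_of_lt
        (show (-(3:ℝ)/2) < -1 by norm_num) hinv0).const_mul _
  -- integrability of f on the pieces
  have hIfA : IntegrableOn f (Ioc (0:ℝ) 1) := by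
    apply Integrable.mono' hIgA (hmeas.aestronglyMeasurable.restrict)
    refine (ae_restrict_iff' measurableSet_Ioc).2 (ae_of_all _ ?_)
    intro x hx
    rw [Real.norm_eq_abs, abs_of_nonneg (hf_nonneg x hx.1)]
    exact hbA x hx
  have hIfB : IntegrableOn f (Ioc (1:ℝ) ε⁻¹) := by
    apply Integrable.mono' hIgB (hmeas.aestronglyMeasurable.restrict)
    refine (ae_restrict_iff' measurableSet_Ioc).2 (ae_of_all _ ?_)
    intro x hx
    rw [Real.norm_eq_abs, abs_of_nonneg (hf_nonneg x (lt_trans one_pos hx.1))]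
    exact hbB x hx
  have hIfC : IntegrableOn f (Ioi ε⁻¹) := by
    apply Integrable.mono' hIgC (hmeas.aestronglyMeasurable.restrict)
    refine (ae_restrict_iff' measurableSet_Ioi).2 (ae_of_all _ ?_)
    intro x hx
    rw [Real.norm_eq_abs, abs_of_nonneg (hf_nonneg x (lt_trans hinv0 hx))]
    exact hbC x hx
  have hIf1 : IntegrableOn f (Ioi (1:ℝ)) := by
    rw [← Ioc_union_Ioi_eq_Ioi hinv1]
    exact hIfB.union hIfC
  -- splitting
  have hsplit2 : ∫ η in Ioi (1:ℝ), f η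
      = (∫ η in Ioc (1:ℝ) ε⁻¹, f η) + ∫ η in Ioi ε⁻¹, f η := by
    rw [← Ioc_union_Ioi_eq_Ioi hinv1]
    exact setIntegral_union Ioc_disjoint_Ioi_same measurableSet_Ioi hIfB hIfC
  have hsplit1 : ∫ η in Ioi (0:ℝ), f η
      = (∫ η in Ioc (0:ℝ) 1, f η) + ∫ η in Ioi (1:ℝ), f η := by
    rw [← Ioc_union_Ioi_eq_Ioi zero_le_one]
    exact setIntegral_union Ioc_disjoint_Ioi_same measurableSet_Ioi hIfA hIf1
  -- integral computations
  have hIA : ∫ η in Ioc (0:ℝ) 1, f η ≤ ε * (2*m)^m * 2 := by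
    have hval : ∫ η in Ioc (0:ℝ) 1, (η:ℝ) ^ (-(1:ℝ)/2) = 2 := by
      rw [← intervalIntegral.integral_of_le zero_le_one,
        integral_rpow (Or.inl (by norm_num))]
      rw [Real.one_rpow, Real.zero_rpow (by norm_num)]
      norm_num
    calc ∫ η in Ioc (0:ℝ) 1, f η ≤ ∫ η in Ioc (0:ℝ) 1, gA η :=
        setIntegral_mono_on hIfA hIgA measurableSet_Ioc hbA
      _ = ε * (2*m)^m * ∫ η in Ioc (0:ℝ) 1, (η:ℝ) ^ (-(1:ℝ)/2) := by
          rw [hgA, MeasureTheory.integral_const_mul]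
      _ = ε * (2*m)^m * 2 := by rw [hval]
  have hIB : ∫ η in Ioc (1:ℝ) ε⁻¹, f η ≤ ε * L^m * L := by
    have hval : ∫ η in Ioc (1:ℝ) ε⁻¹, (η:ℝ)⁻¹ = L := by
      rw [← intervalIntegral.integral_of_le hinv1,
        integral_inv_of_pos one_pos hinv0, div_one, Real.log_inv, ← hLeq]
    calc ∫ η in Ioc (1:ℝ) ε⁻¹, f η ≤ ∫ η in Ioc (1:ℝ) ε⁻¹, gB η :=
        setIntegral_mono_on hIfB hIgB measurableSet_Ioc hbB
      _ = ε * L^m * ∫ η in Ioc (1:ℝ) ε⁻¹, (η:ℝ)⁻¹ := by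
          rw [hgB, MeasureTheory.integral_const_mul]
      _ = ε * L^m * L := by rw [hval]
  have hIC : ∫ η in Ioi ε⁻¹, f η ≤ 2^m * L^m * ε + 2^m * (2*m)^m * (2*ε) := by
    have hval2 : ∫ η in Ioi ε⁻¹, (η:ℝ) ^ (-(2:ℝ)) = ε := by
      rw [integral_Ioi_rpow_of_lt (by norm_num) hinv0]
      rw [show (-(2:ℝ)) + 1 = -1 by norm_num, Real.rpow_neg_one, inv_inv]
      ring
    have hval3 : ∫ η in Ioi ε⁻¹, (η:ℝ) ^ (-(3:ℝ)/2) = 2 * ε ^ ((1:ℝ)/2) := by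
      rw [integral_Ioi_rpow_of_lt (show (-(3:ℝ)/2) < -1 by norm_num) hinv0]
      have h1 : (ε⁻¹ : ℝ) ^ ((-(3:ℝ)/2) + 1) = ε ^ ((1:ℝ)/2) := by
        rw [← Real.rpow_neg_one ε, ← Real.rpow_mul hε0.le]
        norm_num
      rw [h1]
      field_simp
      ring
    have hεsq : ε ^ ((1:ℝ)/2) * (2 * ε ^ ((1:ℝ)/2)) = 2 * ε := by
      rw [show ε ^ ((1:ℝ)/2) * (2 * ε ^ ((1:ℝ)/2)) = 2 * (ε ^ ((1:ℝ)/2) * ε ^ ((1:ℝ)/2)) by ring,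
        ← Real.rpow_add hε0]
      norm_num
    calc ∫ η in Ioi ε⁻¹, f η ≤ ∫ η in Ioi ε⁻¹, gC η :=
        setIntegral_mono_on hIfC hIgC measurableSet_Ioi hbC
      _ = (∫ η in Ioi ε⁻¹, 2^m * L^m * (η:ℝ) ^ (-(2:ℝ)))
          + ∫ η in Ioi ε⁻¹, 2^m * (2*m)^m * ε^((1:ℝ)/2) * (η:ℝ) ^ (-(3:ℝ)/2) := by
          rw [hgC]
          exact MeasureTheory.integral_add
            ((integrableOn_Ioi_rpow_of_lt (by norm_num) hinv0).const_mul _)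
            ((integrableOn_Ioi_rpow_of_lt (show (-(3:ℝ)/2) < -1 by norm_num) hinv0).const_mul _)
      _ = 2^m * L^m * ε + 2^m * (2*m)^m * ε^((1:ℝ)/2) * (2 * ε ^ ((1:ℝ)/2)) := by
          rw [MeasureTheory.integral_const_mul, MeasureTheory.integral_const_mul, hval2, hval3]
      _ = 2^m * L^m * ε + 2^m * (2*m)^m * (2*ε) := by
          rw [mul_assoc (2^m * (2*m)^m : ℝ), hεsq]
  -- final arithmetic
  have hpow1 : (2:ℝ)^(m+1) * 2^(m+1) = 2^(2*m+2) := by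
    rw [← pow_add]; congr 1; omega
  have t1 : ε * (2*m)^m * 2 ≤ 2^(m+2) * (2*m)^m * (ε * L^(m+1)) := by
    calc ε * (2*m)^m * 2 = 2*ε*(2*(m:ℝ))^m * 1 := by ring
      _ ≤ 2*ε*(2*(m:ℝ))^m * (2^(m+1) * L^(m+1)) :=
          mul_le_mul_of_nonneg_left hp1 (by positivity)
      _ = (2^(m+1)*2) * (2*(m:ℝ))^m * (ε * L^(m+1)) := by ring
      _ = 2^(m+2) * (2*m)^m * (ε * L^(m+1)) := by rw [← pow_succ]
  have t2 : ε * L^m * L = 1 * (ε * L^(m+1)) := by rw [pow_succ]; ring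
  have t3 : 2^m * L^m * ε ≤ 2^(m+1) * (ε * L^(m+1)) := by
    calc 2^m * L^m * ε ≤ 2^m * (2 * L^(m+1)) * ε := by
          exact mul_le_mul_of_nonneg_right
            (mul_le_mul_of_nonneg_left hp2 (by positivity)) hε0.le
      _ = (2^m * 2) * (ε * L^(m+1)) := by ring
      _ = 2^(m+1) * (ε * L^(m+1)) := by rw [← pow_succ]
  have t4 : 2^m * (2*m)^m * (2*ε) ≤ 2^(2*m+2) * (2*m)^m * (ε * L^(m+1)) := by
    calc 2^m * (2*(m:ℝ))^m * (2*ε) = 2^(m+1) * (2*(m:ℝ))^m * ε * 1 := by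
          rw [pow_succ]; ring
      _ ≤ 2^(m+1) * (2*(m:ℝ))^m * ε * (2^(m+1) * L^(m+1)) :=
          mul_le_mul_of_nonneg_left hp1 (by positivity)
      _ = (2^(m+1) * 2^(m+1)) * (2*(m:ℝ))^m * (ε * L^(m+1)) := by ring
      _ = 2^(2*m+2) * (2*m)^m * (ε * L^(m+1)) := by rw [hpow1]
  have hring : 2^(m+2) * (2*(m:ℝ))^m * (ε * L^(m+1)) + 1 * (ε * L^(m+1))
      + 2^(m+1) * (ε * L^(m+1)) + 2^(2*m+2) * (2*(m:ℝ))^m * (ε * L^(m+1))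
      = (2^(m+2)*(2*(m:ℝ))^m + 1 + 2^(m+1) + 2^(2*m+2)*(2*(m:ℝ))^m) * ε * L^(m+1) := by
    ring
  calc ∫ η in Ioi (0:ℝ), f η
      = (∫ η in Ioc (0:ℝ) 1, f η) + ((∫ η in Ioc (1:ℝ) ε⁻¹, f η) + ∫ η in Ioi ε⁻¹, f η) := by
        rw [hsplit1, hsplit2]
    _ ≤ (ε * (2*m)^m * 2) + ((ε * L^m * L) + (2^m * L^m * ε + 2^m * (2*m)^m * (2*ε))) := by
        have := add_le_add hIB hIC
        exact add_le_add hIA this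
    _ ≤ (2^(m+2)*(2*(m:ℝ))^m + 1 + 2^(m+1) + 2^(2*m+2)*(2*(m:ℝ))^m) * ε * L^(m+1) := by
        rw [← hring]
        linarith [t1, t3, t4, t2.le]
end

section
/- Let U ⊆ ℝ² be a bounded measurable set and f : U → ℝ measurable. Suppose there exist constants A > 0, h > 1, and an integer m ∈ {0,1} such that for all t ∈ (0, 1/2), the Lebesgue measure of {x ∈ U : |f(x)| ≤ t} is at most A t^{1/h} |log t|^m. Then there is a constant C > 0 such that for every bounded measurable a : U → ℝ and every λ ≥ 2, ∫_{{x ∈ U : |f(x)| ≥ 1/λ}} |a(x)| / (1 + λ|f(x)|) dx ≤ C ‖a‖_∞ (log λ)^m / λ^{1/h}. -/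
/-!
On `{|f| ≥ 1/L}` the weight `1/(1 + L|f|)` is at most `|f|⁻¹ / L`, and `|f|⁻¹ ≤ L` there. The
dyadic layer-cake bound `min z 2^(K+j) ≤ 2^j + ∑_{k<K} 2^(k+j) 1[2^(k+j) ≤ z]` turns `∫ |f|⁻¹` into
`4|U| + ∑_N 2^N |{|f| ≤ 2^-N}|`, where `2 ≤ N` and `2^N ≲ L`. By hypothesis the `N`-th layer costs
at most `A (2^(1-1/h))^N (N log 2)^m`: a geometric series of ratio `2^(1-1/h) > 1`, hence
dominated by its last term `≲ L^(1-1/h) (log L)^m`. Dividing by `L` gives the bound.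
-/

open MeasureTheory Real Set

theorem min_le_pow_add_sum_dyadic {𝕜 : Type*} [Field 𝕜] [LinearOrder 𝕜] [IsStrictOrderedRing 𝕜]
    (z : 𝕜) (j K : ℕ) :
    min z (2 ^ (K + j)) ≤
      2 ^ j + ∑ k ∈ Finset.range K, if (2:𝕜) ^ (k + j) ≤ z then (2:𝕜) ^ (k + j) else 0 := by
  induction K with
  | zero => simp
  | succ K ih =>
    rw [Finset.sum_range_succ]
    have hpow : (2:𝕜) ^ (K + 1 + j) = 2 ^ (K + j) + 2 ^ (K + j) := by ring
    rcases le_or_gt ((2:𝕜) ^ (K + j)) z with hz | hz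
    · rw [min_eq_right hz] at ih
      rw [if_pos hz, hpow]
      linarith [min_le_right z (2 ^ (K + j) + 2 ^ (K + j))]
    · rw [min_eq_left hz.le] at ih
      rw [if_neg hz.not_ge, add_zero]
      exact (min_le_left _ _).trans ih

theorem setIntegral_le_dyadic_sum {α : Type*} [MeasurableSpace α] {μ : Measure α} {s : Set α}
    (hs : MeasurableSet s) (hμs : μ s ≠ ⊤) {z : α → ℝ} (hz : Measurable z)
    (hzi : IntegrableOn z s μ) (j K : ℕ) (hzs : ∀ x ∈ s, z x ≤ 2 ^ (K + j)) :
    ∫ x in s, z x ∂μ ≤ 2 ^ j * μ.real s +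
      ∑ k ∈ Finset.range K, 2 ^ (k + j) * μ.real (s ∩ {x | 2 ^ (k + j) ≤ z x}) := by
  have hmeas : ∀ c : ℝ, MeasurableSet {x | c ≤ z x} := fun c =>
    measurableSet_le measurable_const hz
  have hind : ∀ k ∈ Finset.range K,
      IntegrableOn ({x | 2 ^ (k + j) ≤ z x}.indicator fun _ => (2:ℝ) ^ (k + j)) s μ :=
    fun k _ => (integrableOn_const hμs).indicator (hmeas _)
  calc ∫ x in s, z x ∂μ
      ≤ ∫ x in s, (2 ^ j + ∑ k ∈ Finset.range K,
          {x | 2 ^ (k + j) ≤ z x}.indicator (fun _ => (2:ℝ) ^ (k + j)) x) ∂μ := by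
        refine setIntegral_mono_on hzi
          ((integrableOn_const hμs).add (integrable_finsetSum _ hind)) hs fun x hx => ?_
        rw [← min_eq_left (hzs x hx)]
        simpa only [indicator_apply, mem_ofPred_eq] using min_le_pow_add_sum_dyadic (z x) j K
    _ = _ := by
        rw [integral_add (integrableOn_const hμs (C := (2:ℝ) ^ j)) (integrable_finsetSum _ hind),
          integral_finsetSum _ hind, setIntegral_const, smul_eq_mul, mul_comm]
        congr 1
        refine Finset.sum_congr rfl fun k _ => ?_
        rw [setIntegral_indicator (hmeas _), setIntegral_const, smul_eq_mul, mul_comm]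

theorem sum_range_pow_le_pow_div {𝕜 : Type*} [Field 𝕜] [LinearOrder 𝕜] [IsStrictOrderedRing 𝕜]
    {r : 𝕜} (hr : 1 < r) (n : ℕ) :
    ∑ k ∈ Finset.range n, r ^ k ≤ r ^ n / (r - 1) := by
  rw [geom_sum_eq hr.ne']
  exact div_le_div_of_nonneg_right (by linarith) (by linarith)

theorem sum_range_two_rpow_pow_le {p L : ℝ} (hp : 0 < p) {n : ℕ} (hnL : 2 ^ (n + 1) ≤ L) :
    ∑ k ∈ Finset.range n, ((2:ℝ) ^ p) ^ (k + 2) ≤ 2 ^ p / (2 ^ p - 1) * L ^ p := by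
  have hr : 1 < (2:ℝ) ^ p := one_lt_rpow one_lt_two hp
  have hpow : ((2:ℝ) ^ p) ^ (n + 1) ≤ L ^ p := by
    rw [← rpow_natCast, ← rpow_mul two_pos.le, mul_comm, rpow_mul two_pos.le, rpow_natCast]
    exact rpow_le_rpow (by positivity) hnL hp.le
  calc ∑ k ∈ Finset.range n, ((2:ℝ) ^ p) ^ (k + 2)
      = (2 ^ p) ^ 2 * ∑ k ∈ Finset.range n, ((2:ℝ) ^ p) ^ k := by
        rw [Finset.mul_sum]
        exact Finset.sum_congr rfl fun k _ => by ring
    _ ≤ (2 ^ p) ^ 2 * ((2 ^ p) ^ n / (2 ^ p - 1)) := by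
        gcongr
        exact sum_range_pow_le_pow_div hr n
    _ = 2 ^ p / (2 ^ p - 1) * ((2 ^ p) ^ (n + 1)) := by ring
    _ ≤ 2 ^ p / (2 ^ p - 1) * L ^ p := by
        gcongr

section Superlevel

variable {α : Type*} [MeasurableSpace α] {μ : Measure α} {U : Set α} {f : α → ℝ}

theorem pow_mul_measureReal_sublevel_le {A h : ℝ} {m : ℕ}
    (hsub : ∀ t ∈ Ioo (0:ℝ) (1/2), μ.real {x ∈ U | |f x| ≤ t} ≤ A * t ^ (1/h) * |log t| ^ m)
    {N : ℕ} (hN : 2 ≤ N) :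
    2 ^ N * μ.real {x ∈ U | |f x| ≤ (2 ^ N)⁻¹} ≤ A * (2 ^ (1 - 1/h)) ^ N * (N * log 2) ^ m := by
  have h2N : (0:ℝ) < 2 ^ N := by positivity
  have ht : ((2:ℝ) ^ N)⁻¹ ∈ Ioo (0:ℝ) (1/2) := by
    refine ⟨by positivity, ?_⟩
    rw [one_div]
    exact inv_strictAnti₀ two_pos ((by norm_num : (2:ℝ) < 2 ^ 2).trans_le
      (pow_le_pow_right₀ one_le_two hN))
  have hpow : (2:ℝ) ^ N * (((2:ℝ) ^ N)⁻¹) ^ (1/h) = (2 ^ (1 - 1/h)) ^ N := by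
    rw [inv_rpow h2N.le, ← rpow_natCast, ← rpow_mul two_pos.le, ← rpow_natCast (2 ^ (1 - 1/h)),
      ← rpow_mul two_pos.le, sub_mul, one_mul, rpow_sub two_pos, rpow_natCast, mul_comm (1/h),
      div_eq_mul_inv (2 ^ N)]
  have hlog : |log ((2:ℝ) ^ N)⁻¹| = N * log 2 := by
    rw [log_inv, abs_neg, log_pow, abs_of_nonneg (by positivity)]
  calc 2 ^ N * μ.real {x ∈ U | |f x| ≤ (2 ^ N)⁻¹}
      ≤ 2 ^ N * (A * (((2:ℝ) ^ N)⁻¹) ^ (1/h) * |log ((2:ℝ) ^ N)⁻¹| ^ m) :=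
        mul_le_mul_of_nonneg_left (hsub _ ht) h2N.le
    _ = A * (2 ^ (1 - 1/h)) ^ N * (N * log 2) ^ m := by
        rw [← hpow, hlog]; ring

theorem integrableOn_inv_abs_superlevel (hU : MeasurableSet U) (hμU : μ U ≠ ⊤)
    (hf : Measurable f) {L : ℝ} (hL : 0 < L) :
    IntegrableOn (fun x => |f x|⁻¹) {x ∈ U | 1/L ≤ |f x|} μ := by
  refine Measure.integrableOn_of_bounded (M := L)
    (measure_ne_top_of_subset (fun x hx => hx.1) hμU) hf.abs.inv.aestronglyMeasurable ?_
  refine ae_restrict_of_forall_mem (hU.inter (measurableSet_le measurable_const hf.abs))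
    fun x hx => ?_
  rw [norm_inv, Real.norm_eq_abs, abs_abs]
  exact inv_le_of_inv_le₀ hL (one_div L ▸ hx.2)

theorem setIntegral_inv_abs_superlevel_le_sum (hU : MeasurableSet U) (hμU : μ U ≠ ⊤)
    (hf : Measurable f) {A h : ℝ} {m : ℕ} (hA : 0 ≤ A)
    (hsub : ∀ t ∈ Ioo (0:ℝ) (1/2), μ.real {x ∈ U | |f x| ≤ t} ≤ A * t ^ (1/h) * |log t| ^ m)
    {L : ℝ} (hL : 0 < L) {n : ℕ} (hLn : L ≤ 2 ^ (n + 2)) :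
    ∫ x in {x ∈ U | 1/L ≤ |f x|}, |f x|⁻¹ ∂μ ≤ 4 * μ.real U +
      A * (∑ k ∈ Finset.range n, (2 ^ (1 - 1/h)) ^ (k + 2)) * ((n + 1) * log 2) ^ m := by
  set S := {x ∈ U | 1/L ≤ |f x|}
  have hSU : S ⊆ U := fun x hx => hx.1
  have hS : MeasurableSet S := hU.inter (measurableSet_le measurable_const hf.abs)
  have hfS : ∀ x ∈ S, 0 < |f x| := fun x hx => (one_div_pos.2 hL).trans_le hx.2
  have hzS : ∀ x ∈ S, |f x|⁻¹ ≤ 2 ^ (n + 2) := fun x hx =>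
    (inv_le_of_inv_le₀ hL (one_div L ▸ hx.2)).trans hLn
  have hterm : ∀ k ∈ Finset.range n,
      2 ^ (k + 2) * μ.real (S ∩ {x | 2 ^ (k + 2) ≤ |f x|⁻¹}) ≤
        A * (2 ^ (1 - 1/h)) ^ (k + 2) * ((n + 1) * log 2) ^ m := by
    intro k hk
    have hsubset :
        S ∩ {x | 2 ^ (k + 2) ≤ |f x|⁻¹} ⊆ {x ∈ U | |f x| ≤ (2 ^ (k + 2))⁻¹} :=
      fun x ⟨hxS, hx⟩ => ⟨hxS.1, (le_inv_comm₀ (by positivity) (hfS x hxS)).1 hx⟩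
    calc 2 ^ (k + 2) * μ.real (S ∩ {x | 2 ^ (k + 2) ≤ |f x|⁻¹})
        ≤ 2 ^ (k + 2) * μ.real {x ∈ U | |f x| ≤ (2 ^ (k + 2))⁻¹} := by
          gcongr
          exact measure_ne_top_of_subset (fun x hx => hx.1) hμU
      _ ≤ A * (2 ^ (1 - 1/h)) ^ (k + 2) * ((k + 2 : ℕ) * log 2) ^ m :=
          pow_mul_measureReal_sublevel_le hsub (by omega)
      _ ≤ A * (2 ^ (1 - 1/h)) ^ (k + 2) * ((n + 1) * log 2) ^ m := by
          have : (k:ℝ) + 1 ≤ n := by exact_mod_cast Finset.mem_range.1 hk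
          gcongr
          push_cast
          linarith
  calc ∫ x in S, |f x|⁻¹ ∂μ
      ≤ 2 ^ 2 * μ.real S +
          ∑ k ∈ Finset.range n, 2 ^ (k + 2) * μ.real (S ∩ {x | 2 ^ (k + 2) ≤ |f x|⁻¹}) :=
        setIntegral_le_dyadic_sum hS (measure_ne_top_of_subset hSU hμU) hf.abs.inv
          (integrableOn_inv_abs_superlevel hU hμU hf hL) 2 n hzS
    _ ≤ 4 * μ.real U +
          ∑ k ∈ Finset.range n, A * (2 ^ (1 - 1/h)) ^ (k + 2) * ((n + 1) * log 2) ^ m := by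
        gcongr ?_ + ?_
        · norm_num
          exact measureReal_mono hSU hμU
        · exact Finset.sum_le_sum hterm
    _ = _ := by rw [Finset.mul_sum, Finset.sum_mul]

theorem setIntegral_inv_abs_superlevel_le_rpow (hU : MeasurableSet U) (hμU : μ U ≠ ⊤)
    (hf : Measurable f)
    {A h : ℝ} {m : ℕ} (hA : 0 ≤ A) (hh : 1 < h)
    (hsub : ∀ t ∈ Ioo (0:ℝ) (1/2), μ.real {x ∈ U | |f x| ≤ t} ≤ A * t ^ (1/h) * |log t| ^ m)
    {L : ℝ} (hL : 2 ≤ L) :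
    ∫ x in {x ∈ U | 1/L ≤ |f x|}, |f x|⁻¹ ∂μ ≤
      4 * μ.real U + A * (2 ^ (1 - 1/h) / (2 ^ (1 - 1/h) - 1) * L ^ (1 - 1/h)) * log L ^ m := by
  obtain ⟨n, hnL, hLn⟩ : ∃ n : ℕ, 2 ^ (n + 1) ≤ L ∧ L < 2 ^ (n + 2) := by
    obtain ⟨n, h1, h2⟩ := exists_nat_pow_near (x := L / 2) (by linarith) one_lt_two
    exact ⟨n, by rw [pow_succ]; linarith, by rw [pow_succ]; linarith⟩
  have hlog : ((n:ℝ) + 1) * log 2 ≤ log L := by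
    rw [← log_le_log_iff (by positivity) (by linarith)] at hnL
    simpa [log_pow] using hnL
  refine (setIntegral_inv_abs_superlevel_le_sum hU hμU hf hA hsub (by linarith) hLn.le).trans ?_
  have hp : 0 < 1 - 1/h := by rw [sub_pos, div_lt_one (by linarith)]; exact hh
  have hr : 0 < (2:ℝ) ^ (1 - 1/h) - 1 := by linarith [one_lt_rpow one_lt_two hp]
  gcongr
  exact sum_range_two_rpow_pow_le hp hnL

theorem setIntegral_abs_div_one_add_mul_le (hU : MeasurableSet U) (hμU : μ U ≠ ⊤)
    (hf : Measurable f) {a : α → ℝ} {M : ℝ} (ha : Measurable a) (hM : ∀ x, |a x| ≤ M)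
    {L : ℝ} (hL : 0 < L) :
    ∫ x in {x ∈ U | 1/L ≤ |f x|}, |a x| / (1 + L * |f x|) ∂μ ≤
      M / L * ∫ x in {x ∈ U | 1/L ≤ |f x|}, |f x|⁻¹ ∂μ := by
  have hS : MeasurableSet {x ∈ U | 1/L ≤ |f x|} :=
    hU.inter (measurableSet_le measurable_const hf.abs)
  have hint : IntegrableOn (fun x => |a x| / (1 + L * |f x|)) {x ∈ U | 1/L ≤ |f x|} μ := by
    refine Measure.integrableOn_of_bounded (M := M)
      (measure_ne_top_of_subset (fun x hx => hx.1) hμU)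
      (ha.abs.div (measurable_const.add (measurable_const.mul hf.abs))).aestronglyMeasurable
      (Filter.Eventually.of_forall fun x => ?_)
    have hden : 1 ≤ 1 + L * |f x| := by have := abs_nonneg (f x); nlinarith
    rw [Real.norm_eq_abs, abs_of_nonneg (div_nonneg (abs_nonneg _) (by linarith))]
    exact (div_le_self (abs_nonneg _) hden).trans (hM x)
  rw [← integral_const_mul]
  refine setIntegral_mono_on hint
    ((integrableOn_inv_abs_superlevel hU hμU hf hL).const_mul _) hS fun x hx => ?_
  have hfx : 0 < |f x| := (one_div_pos.2 hL).trans_le hx.2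
  calc |a x| / (1 + L * |f x|) ≤ M / (L * |f x|) :=
        div_le_div₀ ((abs_nonneg _).trans (hM x)) (hM x) (by positivity) (by linarith)
    _ = M / L * |f x|⁻¹ := by ring

end Superlevel

theorem div_mul_add_rpow_le {h L M B A c : ℝ} {m : ℕ} (hh : 1 < h) (hL : 2 ≤ L) (hM : 0 ≤ M)
    (hB : 0 ≤ B) :
    M / L * (B + A * (c * L ^ (1 - 1/h)) * log L ^ m) ≤
      (B / log 2 ^ m + A * c) * M * log L ^ m / L ^ (1/h) := by
  have hL0 : 0 < L := by linarith
  have hXL : L ^ (1/h) ≤ L := by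
    simpa using rpow_le_rpow_of_exponent_le (by linarith) ((div_le_one (by linarith)).2 hh.le)
  have hBterm : M / L * B ≤ B / log 2 ^ m * M * log L ^ m / L ^ (1/h) :=
    calc M / L * B ≤ M / L ^ (1/h) * B := by gcongr
      _ = B / log 2 ^ m * M * log 2 ^ m / L ^ (1/h) := by field_simp
      _ ≤ B / log 2 ^ m * M * log L ^ m / L ^ (1/h) := by gcongr
  rw [rpow_sub hL0, rpow_one]
  calc M / L * (B + A * (c * (L / L ^ (1/h))) * log L ^ m)
      = M / L * B + A * c * M * log L ^ m / L ^ (1/h) := by field_simp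
    _ ≤ _ := by rw [add_mul, add_mul, add_div]; linarith

theorem stmt_10_general (U : Set (ℝ × ℝ)) (hU : MeasurableSet U) (hUb : Bornology.IsBounded U)
    (f : ℝ × ℝ → ℝ) (hf : Measurable f)
    (A h : ℝ) (m : ℕ) (hA : 0 < A) (hh : 1 < h)
    (hsub : ∀ t ∈ Ioo (0:ℝ) (1/2),
      (volume {x ∈ U | |f x| ≤ t}).toReal ≤ A * t ^ (1/h) * |Real.log t| ^ m) :
    ∃ C > 0, ∀ (a : ℝ × ℝ → ℝ) (M : ℝ), Measurable a → (∀ x, |a x| ≤ M) →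
      ∀ L : ℝ, 2 ≤ L →
        ∫ x in {x ∈ U | 1/L ≤ |f x|}, |a x| / (1 + L * |f x|)
          ≤ C * M * (Real.log L) ^ m / L ^ (1/h) := by
  have hμU : volume U ≠ ⊤ := hUb.measure_lt_top.ne
  have hr : 1 < (2:ℝ) ^ (1 - 1/h) :=
    one_lt_rpow one_lt_two (by rw [sub_pos, div_lt_one (by linarith)]; exact hh)
  refine ⟨4 * volume.real U / log 2 ^ m + A * (2 ^ (1 - 1/h) / (2 ^ (1 - 1/h) - 1)), by
    have : 0 < (2:ℝ) ^ (1 - 1/h) - 1 := by linarith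
    positivity, ?_⟩
  intro a M ha hM L hL
  have hM0 : 0 ≤ M := (abs_nonneg _).trans (hM 0)
  calc ∫ x in {x ∈ U | 1/L ≤ |f x|}, |a x| / (1 + L * |f x|)
      ≤ M / L * ∫ x in {x ∈ U | 1/L ≤ |f x|}, |f x|⁻¹ :=
        setIntegral_abs_div_one_add_mul_le hU hμU hf ha hM (by linarith)
    _ ≤ M / L * (4 * volume.real U +
          A * (2 ^ (1 - 1/h) / (2 ^ (1 - 1/h) - 1) * L ^ (1 - 1/h)) * log L ^ m) := by
        gcongr
        exact setIntegral_inv_abs_superlevel_le_rpow hU hμU hf hA.le hh hsub hL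
    _ ≤ _ := div_mul_add_rpow_le hh hL hM0 (by positivity)

theorem stmt_10 (U : Set (ℝ × ℝ)) (hU : MeasurableSet U) (hUb : Bornology.IsBounded U)
    (f : ℝ × ℝ → ℝ) (hf : Measurable f)
    (A h : ℝ) (m : ℕ) (hA : 0 < A) (hh : 1 < h) (hm : m = 0 ∨ m = 1)
    (hsub : ∀ t ∈ Ioo (0:ℝ) (1/2),
      (volume {x ∈ U | |f x| ≤ t}).toReal ≤ A * t ^ (1/h) * |Real.log t| ^ m) :
    ∃ C > 0, ∀ (a : ℝ × ℝ → ℝ) (M : ℝ), Measurable a → (∀ x, |a x| ≤ M) →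
      ∀ L : ℝ, 2 ≤ L →
        ∫ x in {x ∈ U | 1/L ≤ |f x|}, |a x| / (1 + L * |f x|)
          ≤ C * M * (Real.log L) ^ m / L ^ (1/h) :=
  stmt_10_general U hU hUb f hf A h m hA hh hsub
end

section
/- Let U ⊆ ℝ² be a bounded measurable set and f : U → ℝ measurable. Suppose there exist A > 0, h > 1 and an integer m ∈ {0,1} such that for all t ∈ (0, 1/2), |{x ∈ U : |f(x)| ≤ t}| ≤ A t^{1/h} |log t|^m. Then there is C > 0 such that for every bounded measurable ψ : U → ℂ and every λ ≥ 2, ∫_U |ψ(x)| / (1 + λ|f(x)|) dx ≤ C ‖ψ‖_∞ (log λ)^m / λ^{1/h}. -/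
set_option maxHeartbeats 1000000


open MeasureTheory Real Set

/-- Key calculus fact: `u^(1/h) * log (1/u) ≤ h` for `u ∈ (0,1)`, `h > 1`. -/
lemma aux_rpow_log {h : ℝ} (hh : 1 < h) {u : ℝ} (hu0 : 0 < u) (hu1 : u < 1) :
    u ^ (1/h) * Real.log u⁻¹ ≤ h := by
  have hh0 : 0 < h := lt_trans one_pos hh
  set y : ℝ := u ^ (1/h) with hy
  have hy0 : 0 < y := Real.rpow_pos_of_pos hu0 _
  have hy1 : y < 1 := Real.rpow_lt_one hu0.le hu1 (by positivity)
  have hlog : Real.log u = h * Real.log y := by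
    rw [hy, Real.log_rpow hu0]; field_simp
  have h1 : Real.log y⁻¹ ≤ y⁻¹ - 1 := by
    have := Real.log_le_sub_one_of_pos (x := y⁻¹) (by positivity)
    linarith
  have h2 : -(y * Real.log y) ≤ 1 := by
    have h3 : -Real.log y ≤ y⁻¹ := by
      rw [Real.log_inv] at h1; linarith [inv_pos.mpr hy0]
    calc -(y * Real.log y) = y * (-Real.log y) := by ring
    _ ≤ y * y⁻¹ := by exact mul_le_mul_of_nonneg_left h3 hy0.le
    _ = 1 := mul_inv_cancel₀ hy0.ne'
  rw [Real.log_inv, hlog]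
  calc y * -(h * Real.log y) = h * (-(y * Real.log y)) := by ring
  _ ≤ h * 1 := by exact mul_le_mul_of_nonneg_left h2 hh0.le
  _ = h := mul_one h

lemma aux_pow_add {m : ℕ} (hm : m = 0 ∨ m = 1) {a b : ℝ} (ha : 0 ≤ a) (hb : 0 ≤ b) :
    (a + b) ^ m ≤ a ^ m + b ^ m := by
  rcases hm with rfl | rfl <;> simp

theorem stmt_11 (U : Set (ℝ × ℝ)) (hU : MeasurableSet U) (hUb : Bornology.IsBounded U)
    (f : ℝ × ℝ → ℝ) (hf : Measurable f)
    (A h : ℝ) (m : ℕ) (hA : 0 < A) (hh : 1 < h) (hm : m = 0 ∨ m = 1)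
    (hsub : ∀ t ∈ Ioo (0:ℝ) (1/2),
      (volume {x ∈ U | |f x| ≤ t}).toReal ≤ A * t ^ (1/h) * |Real.log t| ^ m) :
    ∃ C > 0, ∀ (ψ : ℝ × ℝ → ℂ) (M : ℝ), Measurable ψ → (∀ x, ‖ψ x‖ ≤ M) →
      ∀ L : ℝ, 2 ≤ L →
        ∫ x in U, ‖ψ x‖ / (1 + L * |f x|)
          ≤ C * M * (Real.log L) ^ m / L ^ (1/h) := by
  have hh0 : 0 < h := lt_trans one_pos hh
  have hih1 : 1/h < 1 := by rw [div_lt_one hh0]; exact hh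
  have hih0 : 0 < 1/h := by positivity
  have hvU : volume U < ⊤ := hUb.measure_lt_top
  set uR : ℝ := (volume U).toReal with huR
  have huR0 : 0 ≤ uR := ENNReal.toReal_nonneg
  set C : ℝ := 4 * uR + A * (1 + 2*h) * (1 - 1/h)⁻¹ with hC
  have hC0 : 0 < C := by
    have : 0 < (1 - 1/h)⁻¹ := by
      apply inv_pos.mpr; linarith
    have : 0 < A * (1 + 2*h) * (1 - 1/h)⁻¹ := by positivity
    positivity
  refine ⟨C, hC0, ?_⟩
  intro ψ M hψm hψb L hL
  have hL0 : (0:ℝ) < L := by linarith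
  have hL1 : (1:ℝ) ≤ L := by linarith
  have hM0 : 0 ≤ M := le_trans (norm_nonneg _) (hψb 0)
  have hlogL : Real.log 2 ≤ Real.log L := Real.log_le_log (by norm_num) hL
  have hlog2 : (1:ℝ)/2 ≤ Real.log 2 := by
    have := Real.log_two_gt_d9; linarith
  have hlogLm : (1:ℝ)/2 ≤ (Real.log L) ^ m := by
    rcases hm with rfl | rfl
    · norm_num
    · simpa using le_trans hlog2 hlogL
  have hlogL0 : 0 ≤ Real.log L := by linarith
  have hLpow : 0 < L ^ (1/h) := Real.rpow_pos_of_pos hL0 _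
  -- the weight function
  set F : ℝ × ℝ → ℝ := fun x => (1 + L * |f x|)⁻¹ with hF
  have hden : ∀ x, 0 < 1 + L * |f x| := fun x => by positivity
  have hF0 : ∀ x, 0 < F x := fun x => inv_pos.mpr (hden x)
  have hFle1 : ∀ x, F x ≤ 1 := fun x => by
    rw [hF]; rw [inv_le_one_iff₀]; right
    nlinarith [abs_nonneg (f x)]
  have hFmeas : Measurable F := by
    apply Measurable.inv
    exact measurable_const.add ((hf.abs).const_mul L)
  -- layer cake
  set μ := volume.restrict U with hμ
  have layer : ∫⁻ x in U, ENNReal.ofReal (F x) = ∫⁻ t in Ioi (0:ℝ), μ {a | t < F a} :=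
    lintegral_eq_lintegral_meas_lt μ (ae_of_all _ fun x => (hF0 x).le) hFmeas.aemeasurable
  set t₀ : ℝ := 2 / (2 + L) with ht₀def
  have ht₀0 : 0 < t₀ := by positivity
  have ht₀1 : t₀ < 1 := by rw [div_lt_one (by linarith)]; linarith
  -- region bounds
  have hbound1 : ∫⁻ t in Ioc (0:ℝ) t₀, μ {a | t < F a} ≤ volume U * ENNReal.ofReal t₀ := by
    calc ∫⁻ t in Ioc (0:ℝ) t₀, μ {a | t < F a}
        ≤ ∫⁻ _ in Ioc (0:ℝ) t₀, volume U := by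
          apply setLIntegral_mono' measurableSet_Ioc
          intro t _
          calc μ {a | t < F a} ≤ μ univ := measure_mono (subset_univ _)
          _ = volume U := by rw [hμ, Measure.restrict_apply_univ]
    _ = volume U * ENNReal.ofReal t₀ := by
          rw [setLIntegral_const, Real.volume_Ioc, sub_zero]
  have hbound3 : ∫⁻ t in Ici (1:ℝ), μ {a | t < F a} ≤ 0 := by
    have : ∀ t ∈ Ici (1:ℝ), μ {a | t < F a} = 0 := by
      intro t ht
      convert measure_empty (μ := μ)
      ext a
      simp only [mem_setOf_eq, mem_empty_iff_false, iff_false, not_lt]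
      exact le_trans (hFle1 a) ht
    calc ∫⁻ t in Ici (1:ℝ), μ {a | t < F a} ≤ ∫⁻ _ in Ici (1:ℝ), 0 := by
          apply setLIntegral_mono' measurableSet_Ici
          intro t ht; rw [this t ht]
    _ = 0 := by simp
  -- middle region pointwise bound
  set c₃ : ℝ := A * (1 + 2*h) * L ^ (-(1/h)) * (Real.log L) ^ m with hc₃
  have hc₃0 : 0 ≤ c₃ := by positivity
  have hmid : ∀ t ∈ Ioo t₀ (1:ℝ),
      μ {a | t < F a} ≤ ENNReal.ofReal (c₃ * t ^ (-(1/h))) := by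
    intro t ht
    obtain ⟨htl, htr⟩ := ht
    have ht0 : 0 < t := lt_trans ht₀0 htl
    set s : ℝ := (1 - t) / (t * L) with hs
    have hs0 : 0 < s := by
      apply div_pos (by linarith) (by positivity)
    have hs2 : s < 1/2 := by
      rw [hs, div_lt_iff₀ (by positivity)]
      have h2 : 2 < t * (2 + L) := by
        rw [ht₀def, div_lt_iff₀ (by linarith)] at htl; linarith
      nlinarith
    have hs1 : s < 1 := by linarith
    -- subset
    have hsub1 : {a | t < F a} ∩ U ⊆ {x ∈ U | |f x| ≤ s} := by
      intro a ⟨ha1, ha2⟩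
      refine ⟨ha2, ?_⟩
      simp only [mem_setOf_eq, hF] at ha1
      have hda := hden a
      have h1 : t * (1 + L * |f a|) < 1 := by
        have h2 := mul_lt_mul_of_pos_left ha1 hda
        rw [mul_inv_cancel₀ hda.ne'] at h2
        nlinarith
      rw [hs, le_div_iff₀ (by positivity)]
      nlinarith [abs_nonneg (f a)]
    have hms : MeasurableSet {a | t < F a} := measurableSet_lt measurable_const hFmeas
    have hmeas1 : μ {a | t < F a} ≤ volume {x ∈ U | |f x| ≤ s} := by
      rw [hμ, Measure.restrict_apply hms]
      exact measure_mono hsub1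
    have hfin : volume {x ∈ U | |f x| ≤ s} < ⊤ :=
      lt_of_le_of_lt (measure_mono (sep_subset _ _)) hvU
    have hvol : volume {x ∈ U | |f x| ≤ s} ≤ ENNReal.ofReal (A * s ^ (1/h) * |Real.log s| ^ m) := by
      rw [← ENNReal.ofReal_toReal hfin.ne]
      exact ENNReal.ofReal_le_ofReal (hsub s ⟨hs0, hs2⟩)
    refine le_trans hmeas1 (le_trans hvol (ENNReal.ofReal_le_ofReal ?_))
    -- real inequality
    have hlogs_neg : Real.log s < 0 := Real.log_neg hs0 hs1
    have habs : |Real.log s| = Real.log s⁻¹ := by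
      rw [abs_of_neg hlogs_neg, Real.log_inv]
    have hsinv : s⁻¹ = (t * L) * (1 - t)⁻¹ := by
      rw [hs]; field_simp
    have hls : Real.log s⁻¹ ≤ Real.log L + Real.log (1 - t)⁻¹ := by
      rw [hsinv, Real.log_mul (mul_pos ht0 hL0).ne' (inv_pos.mpr (by linarith : (0:ℝ) < 1 - t)).ne']
      have : Real.log (t * L) ≤ Real.log L :=
        Real.log_le_log (by positivity) (mul_le_of_le_one_left hL0.le htr.le)
      linarith
    have hlog1t : 0 ≤ Real.log (1 - t)⁻¹ := by
      apply Real.log_nonneg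
      rw [le_inv_comm₀ one_pos (by linarith)]; linarith
    have habsm : |Real.log s| ^ m ≤ (Real.log L) ^ m + (Real.log (1 - t)⁻¹) ^ m := by
      rw [habs]
      calc (Real.log s⁻¹) ^ m ≤ (Real.log L + Real.log (1 - t)⁻¹) ^ m := by
            apply pow_le_pow_left₀ (by rw [← habs]; exact abs_nonneg _) hls
      _ ≤ _ := aux_pow_add hm hlogL0 hlog1t
    -- s^(1/h) bounds
    have hsval : s ^ (1/h) = (1 - t) ^ (1/h) * (t * L) ^ (-(1/h)) := by
      rw [hs, Real.div_rpow (by linarith) (mul_pos ht0 hL0).le,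
        Real.rpow_neg (mul_pos ht0 hL0).le, div_eq_mul_inv]
    have htL : (t * L) ^ (-(1/h)) = t ^ (-(1/h)) * L ^ (-(1/h)) := by
      rw [Real.mul_rpow ht0.le hL0.le]
    have htLpos : 0 ≤ (t * L) ^ (-(1/h)) := (Real.rpow_pos_of_pos (by positivity) _).le
    have h1t1 : (1 - t) ^ (1/h) ≤ 1 :=
      Real.rpow_le_one (by linarith) (by linarith) (by positivity)
    -- term 1
    have hterm1 : s ^ (1/h) * (Real.log L) ^ m ≤ (t*L) ^ (-(1/h)) * (Real.log L) ^ m := by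
      apply mul_le_mul_of_nonneg_right _ (by positivity)
      rw [hsval]
      nlinarith [htLpos]
    -- term 2
    have hkey : (1 - t) ^ (1/h) * (Real.log (1 - t)⁻¹) ^ m ≤ h := by
      rcases hm with rfl | rfl
      · simpa using le_trans h1t1 (by linarith : (1:ℝ) ≤ h)
      · simpa using aux_rpow_log hh (by linarith : (0:ℝ) < 1 - t) (by linarith)
    have hterm2 : s ^ (1/h) * (Real.log (1 - t)⁻¹) ^ m ≤ (t*L) ^ (-(1/h)) * (2*h*(Real.log L)^m) := by
      rw [hsval]
      have hpm : 0 ≤ (Real.log (1 - t)⁻¹) ^ m := by positivity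
      calc (1 - t) ^ (1/h) * (t * L) ^ (-(1/h)) * (Real.log (1 - t)⁻¹) ^ m
          = (t * L) ^ (-(1/h)) * ((1 - t) ^ (1/h) * (Real.log (1 - t)⁻¹) ^ m) := by ring
      _ ≤ (t * L) ^ (-(1/h)) * h := mul_le_mul_of_nonneg_left hkey htLpos
      _ ≤ (t*L) ^ (-(1/h)) * (2*h*(Real.log L)^m) := by
          apply mul_le_mul_of_nonneg_left _ htLpos
          nlinarith
    have hs1h : 0 ≤ s ^ (1/h) := (Real.rpow_pos_of_pos hs0 _).le
    calc A * s ^ (1/h) * |Real.log s| ^ m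
        ≤ A * s ^ (1/h) * ((Real.log L) ^ m + (Real.log (1 - t)⁻¹) ^ m) := by
          apply mul_le_mul_of_nonneg_left habsm (by positivity)
    _ = A * (s ^ (1/h) * (Real.log L) ^ m) + A * (s ^ (1/h) * (Real.log (1 - t)⁻¹) ^ m) := by ring
    _ ≤ A * ((t*L) ^ (-(1/h)) * (Real.log L) ^ m) + A * ((t*L) ^ (-(1/h)) * (2*h*(Real.log L)^m)) := by
          have := mul_le_mul_of_nonneg_left hterm1 hA.le
          have := mul_le_mul_of_nonneg_left hterm2 hA.le
          linarith
    _ = c₃ * t ^ (-(1/h)) := by rw [hc₃, htL]; ring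
  -- integrate middle region
  have hrpow_meas : Measurable fun t : ℝ => ENNReal.ofReal (c₃ * t ^ (-(1/h))) :=
    ENNReal.measurable_ofReal.comp ((measurable_id.pow measurable_const).const_mul c₃)
  have hbound2 : ∫⁻ t in Ioo t₀ (1:ℝ), μ {a | t < F a}
      ≤ ENNReal.ofReal (c₃ * (1 - 1/h)⁻¹) := by
    have hIoc : IntegrableOn (fun t : ℝ => t ^ (-(1/h))) (Ioc 0 1) := by
      rw [← intervalIntegrable_iff_integrableOn_Ioc_of_le (by norm_num : (0:ℝ) ≤ 1)]
      exact intervalIntegral.intervalIntegrable_rpow' (by linarith)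
    have hval : ∫ t in Ioc (0:ℝ) 1, t ^ (-(1/h)) = (1 - 1/h)⁻¹ := by
      rw [← intervalIntegral.integral_of_le (by norm_num : (0:ℝ) ≤ 1)]
      rw [integral_rpow (Or.inl (by linarith))]
      rw [Real.one_rpow, Real.zero_rpow (by linarith)]
      field_simp
      ring_nf
    calc ∫⁻ t in Ioo t₀ (1:ℝ), μ {a | t < F a}
        ≤ ∫⁻ t in Ioo t₀ (1:ℝ), ENNReal.ofReal (c₃ * t ^ (-(1/h))) :=
          setLIntegral_mono (hrpow_meas) hmid
    _ ≤ ∫⁻ t in Ioc (0:ℝ) 1, ENNReal.ofReal (c₃ * t ^ (-(1/h))) :=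
          lintegral_mono_set (fun t ht => ⟨lt_trans ht₀0 ht.1, ht.2.le⟩)
    _ = ENNReal.ofReal (∫ t in Ioc (0:ℝ) 1, c₃ * t ^ (-(1/h))) := by
          rw [← ofReal_integral_eq_lintegral_ofReal (hIoc.const_mul c₃)]
          exact (ae_restrict_iff' measurableSet_Ioc).mpr (ae_of_all _ fun t ht => by
            have : 0 ≤ t ^ (-(1/h)) := Real.rpow_nonneg ht.1.le _
            positivity)
    _ = ENNReal.ofReal (c₃ * (1 - 1/h)⁻¹) := by
          rw [integral_const_mul, hval]
  -- combine
  have hcover : Ioi (0:ℝ) ⊆ (Ioc 0 t₀ ∪ Ioo t₀ 1) ∪ Ici 1 := by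
    intro t ht
    rcases le_or_gt t t₀ with h1 | h1
    · exact Or.inl (Or.inl ⟨ht, h1⟩)
    · rcases lt_or_ge t 1 with h2 | h2
      · exact Or.inl (Or.inr ⟨h1, h2⟩)
      · exact Or.inr h2
  have hItotal : ∫⁻ x in U, ENNReal.ofReal (F x)
      ≤ ENNReal.ofReal (C * (Real.log L) ^ m * L ^ (-(1/h))) := by
    rw [layer]
    calc ∫⁻ t in Ioi (0:ℝ), μ {a | t < F a}
        ≤ ∫⁻ t in (Ioc 0 t₀ ∪ Ioo t₀ 1) ∪ Ici 1, μ {a | t < F a} :=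
          lintegral_mono_set hcover
    _ ≤ (∫⁻ t in Ioc 0 t₀ ∪ Ioo t₀ 1, μ {a | t < F a}) + ∫⁻ t in Ici 1, μ {a | t < F a} :=
          lintegral_union_le _ _ _
    _ ≤ ((∫⁻ t in Ioc (0:ℝ) t₀, μ {a | t < F a}) + ∫⁻ t in Ioo t₀ (1:ℝ), μ {a | t < F a}) + 0 :=
          add_le_add (lintegral_union_le _ _ _) hbound3
    _ ≤ (volume U * ENNReal.ofReal t₀ + ENNReal.ofReal (c₃ * (1 - 1/h)⁻¹)) + 0 :=
          add_le_add (add_le_add hbound1 hbound2) le_rfl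
    _ = ENNReal.ofReal (uR * t₀) + ENNReal.ofReal (c₃ * (1 - 1/h)⁻¹) := by
          rw [add_zero, ← ENNReal.ofReal_toReal hvU.ne, ← ENNReal.ofReal_mul huR0]
    _ ≤ ENNReal.ofReal (C * (Real.log L) ^ m * L ^ (-(1/h))) := by
          rw [← ENNReal.ofReal_add (mul_nonneg huR0 ht₀0.le)
            (mul_nonneg hc₃0 (inv_nonneg.mpr (by linarith)))]
          apply ENNReal.ofReal_le_ofReal
          -- final real inequality
          have hLinv : L⁻¹ ≤ L ^ (-(1/h)) := by
            rw [← Real.rpow_neg_one]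
            exact Real.rpow_le_rpow_of_exponent_le hL1 (by linarith)
          have hLnegpow : 0 < L ^ (-(1/h)) := Real.rpow_pos_of_pos hL0 _
          have ht₀le : t₀ ≤ 2 * L⁻¹ := by
            rw [ht₀def, div_le_iff₀ (by linarith)]
            rw [mul_comm, ← mul_assoc]
            have hl : (1:ℝ) ≤ L⁻¹ * L * 1 := by
              rw [inv_mul_cancel₀ hL0.ne']; norm_num
            nlinarith [inv_pos.mpr hL0]
          have h1 : uR * t₀ ≤ 4 * uR * (Real.log L) ^ m * L ^ (-(1/h)) := by
            have ht04 : t₀ ≤ 4 * ((Real.log L)^m * L ^ (-(1/h))) := by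
              calc t₀ ≤ 2 * L⁻¹ := ht₀le
              _ ≤ 2 * L ^ (-(1/h)) := by linarith
              _ ≤ 4 * ((Real.log L)^m * L ^ (-(1/h))) := by nlinarith
            nlinarith
          have h2 : c₃ * (1 - 1/h)⁻¹
              = (A * (1 + 2*h) * (1 - 1/h)⁻¹) * (Real.log L) ^ m * L ^ (-(1/h)) := by
            rw [hc₃]; ring
          rw [hC]; nlinarith
  -- assemble
  haveI : IsFiniteMeasure μ := ⟨by rw [hμ, Measure.restrict_apply_univ]; exact hvU⟩
  have hInt : Integrable (fun x => M * F x) μ := by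
    constructor
    · exact (hFmeas.const_mul M).aestronglyMeasurable
    · apply HasFiniteIntegral.of_bounded (C := M)
      apply ae_of_all
      intro x
      rw [Real.norm_eq_abs, abs_of_nonneg (by positivity : 0 ≤ M * F x)]
      calc M * F x ≤ M * 1 := mul_le_mul_of_nonneg_left (hFle1 x) hM0
      _ = M := mul_one M
  have step1 : ∫ x in U, ‖ψ x‖ / (1 + L * |f x|) ≤ ∫ x in U, M * F x := by
    apply integral_mono_of_nonneg
    · exact ae_of_all _ fun x => by positivity
    · exact hInt
    · apply ae_of_all
      intro x
      show ‖ψ x‖ / (1 + L * |f x|) ≤ M * F x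
      rw [div_eq_mul_inv]
      exact mul_le_mul_of_nonneg_right (hψb x) (hF0 x).le
  have step2 : ∫ x in U, M * F x = M * (∫⁻ x in U, ENNReal.ofReal (F x)).toReal := by
    rw [integral_const_mul]
    congr 1
    rw [integral_eq_lintegral_of_nonneg_ae (ae_of_all _ fun x => (hF0 x).le)
      hFmeas.aestronglyMeasurable]
  have step3 : (∫⁻ x in U, ENNReal.ofReal (F x)).toReal
      ≤ C * (Real.log L) ^ m * L ^ (-(1/h)) :=
    ENNReal.toReal_le_of_le_ofReal (by positivity) hItotal
  calc ∫ x in U, ‖ψ x‖ / (1 + L * |f x|) ≤ ∫ x in U, M * F x := step1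
  _ = M * (∫⁻ x in U, ENNReal.ofReal (F x)).toReal := step2
  _ ≤ M * (C * (Real.log L) ^ m * L ^ (-(1/h))) := mul_le_mul_of_nonneg_left step3 hM0
  _ = C * M * (Real.log L) ^ m / L ^ (1/h) := by
      rw [Real.rpow_neg hL0.le, div_eq_mul_inv]; ring
end

section
/- There exists a constant C > 0 such that for every λ ≥ 2 and every bounded measurable a : [-1,1]² → ℝ, ∫_{{(x,y) ∈ [-1,1]² : λ|x²−y²| ≥ 1}} |a(x,y)| / (1 + λ|x² − y²|) dx dy ≤ C ‖a‖_∞ (log λ)² / λ. -/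
open MeasureTheory Real Set
open scoped ENNReal

/-!
Dyadic decomposition: where `2 ^ k ≤ L |x² - y²| < 2 ^ (k + 1)`, the weight `1 / (1 + L |x² - y²|)`
is at most `2 ^ (-k)` and the point lies in the sublevel set `{|x² - y²| ≤ s}`, `s = 2 ^ (k + 1) / L`.
Since `|x| ||y| - |x|| ≤ |x² - y²|`, the slice of that set at `x` lies in two intervals of length
`2 s / |x|` around `±|x|`, and also in `[-1, 1]`; so its measure is at most `8 s / (|x| + 2 s)`,
whose integral over `|x| ≤ 1` is `16 s log (1 + 1 / (2 s))`. Hence each of the `O(log L)`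
nonempty shells contributes `O(log L / L)`.
-/

namespace SquareDiff

def square : Set (ℝ × ℝ) := Icc (-1, -1) (1, 1)

def sublevel (s : ℝ) : Set (ℝ × ℝ) := {p ∈ square | |p.1 ^ 2 - p.2 ^ 2| ≤ s}

lemma mem_square {p : ℝ × ℝ} : p ∈ square ↔ p.1 ∈ Icc (-1) 1 ∧ p.2 ∈ Icc (-1) 1 := by
  simp only [square, mem_Icc, Prod.le_def]
  tauto

lemma measurableSet_sublevel (s : ℝ) : MeasurableSet (sublevel s) :=
  measurableSet_Icc.inter
    (measurableSet_le (f := fun p : ℝ × ℝ => |p.1 ^ 2 - p.2 ^ 2|) (by fun_prop) measurable_const)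

lemma abs_mul_abs_sub_abs_le (x y : ℝ) : |x| * |(|y| - |x|)| ≤ |x ^ 2 - y ^ 2| := by
  rw [← sq_abs x, ← sq_abs y, show |x| ^ 2 - |y| ^ 2 = -((|y| - |x|) * (|y| + |x|)) by ring,
    abs_neg, abs_mul, abs_of_nonneg (by positivity : 0 ≤ |y| + |x|), mul_comm]
  exact mul_le_mul_of_nonneg_left (by linarith [abs_nonneg y]) (abs_nonneg _)

lemma volume_slice_sublevel_le_two (s x : ℝ) : volume (Prod.mk x ⁻¹' sublevel s) ≤ 2 := by
  calc volume (Prod.mk x ⁻¹' sublevel s) ≤ volume (Icc (-1 : ℝ) 1) :=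
        measure_mono fun y hy => (mem_square.1 hy.1).2
    _ = 2 := by norm_num [Real.volume_Icc]

lemma volume_slice_sublevel_le_div (s : ℝ) {x : ℝ} (hx : x ≠ 0) :
    volume (Prod.mk x ⁻¹' sublevel s) ≤ ENNReal.ofReal (4 * s / |x|) := by
  have hx' : 0 < |x| := abs_pos.2 hx
  have hsub : Prod.mk x ⁻¹' sublevel s ⊆
      Metric.closedBall |x| (s / |x|) ∪ Metric.closedBall (-|x|) (s / |x|) := by
    intro y hy
    have hdist : |(|y| - |x|)| ≤ s / |x| := by
      rw [le_div_iff₀' hx']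
      exact (abs_mul_abs_sub_abs_le x y).trans hy.2
    rcases le_total 0 y with hy0 | hy0
    · left
      rwa [Metric.mem_closedBall, Real.dist_eq, ← abs_of_nonneg hy0]
    · right
      have hneg : y + |x| = -(|y| - |x|) := by rw [abs_of_nonpos hy0]; ring
      rwa [Metric.mem_closedBall, Real.dist_eq, sub_neg_eq_add, hneg, abs_neg]
  calc volume (Prod.mk x ⁻¹' sublevel s)
      ≤ volume (Metric.closedBall |x| (s / |x|)) + volume (Metric.closedBall (-|x|) (s / |x|)) :=
        (measure_mono hsub).trans (measure_union_le _ _)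
    _ ≤ ENNReal.ofReal (4 * s / |x|) := by
        rw [Real.volume_closedBall, Real.volume_closedBall, ← two_mul, ← ENNReal.ofReal_ofNat 2,
          ← ENNReal.ofReal_mul zero_le_two]
        exact ENNReal.ofReal_le_ofReal (le_of_eq (by ring))

lemma volume_slice_sublevel_le {s : ℝ} (hs : 0 < s) (x : ℝ) :
    volume (Prod.mk x ⁻¹' sublevel s) ≤
      (Iic 1).indicator (fun r => ENNReal.ofReal (8 * s / (r + 2 * s))) |x| := by
  by_cases hx1 : |x| ≤ 1
  · rw [indicator_of_mem (mem_Iic.2 hx1)]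
    rcases le_or_gt |x| (2 * s) with hxs | hxs
    · calc volume (Prod.mk x ⁻¹' sublevel s) ≤ ENNReal.ofReal 2 := by
            simpa using volume_slice_sublevel_le_two s x
        _ ≤ _ := ENNReal.ofReal_le_ofReal <| by
            rw [le_div_iff₀ (by positivity)]
            linarith
    · calc volume (Prod.mk x ⁻¹' sublevel s) ≤ ENNReal.ofReal (4 * s / |x|) :=
            volume_slice_sublevel_le_div s (abs_pos.1 (by linarith))
        _ ≤ _ := ENNReal.ofReal_le_ofReal <| by
            rw [div_le_div_iff₀ (by linarith) (by positivity)]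
            nlinarith
  · rw [indicator_of_notMem (by simpa using hx1)]
    have hempty : Prod.mk x ⁻¹' sublevel s = ∅ :=
      eq_empty_of_forall_notMem fun y hy => hx1 (abs_le.2 (mem_square.1 hy.1).1)
    rw [hempty, measure_empty]

lemma lintegral_comp_abs_le {f : ℝ → ℝ≥0∞} (hf : Measurable f) :
    ∫⁻ x, f |x| ≤ 2 * ∫⁻ x in Ici 0, f x := by
  have hpt : ∀ x : ℝ, f |x| ≤ (Ici 0).indicator f x + (Ici 0).indicator f (-x) := by
    intro x
    rcases le_total 0 x with hx | hx
    · rw [abs_of_nonneg hx, indicator_of_mem (mem_Ici.2 hx)]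
      exact le_self_add
    · rw [abs_of_nonpos hx, indicator_of_mem (mem_Ici.2 (neg_nonneg.2 hx))]
      exact le_add_self
  calc ∫⁻ x, f |x| ≤ ∫⁻ x, (Ici 0).indicator f x + (Ici 0).indicator f (-x) := lintegral_mono hpt
    _ = 2 * ∫⁻ x in Ici 0, f x := by
        rw [lintegral_add_left (hf.indicator measurableSet_Ici), lintegral_neg_eq_self,
          lintegral_indicator measurableSet_Ici, two_mul]

lemma lintegral_Icc_div_add {a b c : ℝ} (ha : 0 < a) (hb : 0 ≤ b) (hc : 0 ≤ c) :
    ∫⁻ x in Icc 0 b, ENNReal.ofReal (c / (x + a)) = ENNReal.ofReal (c * log ((b + a) / a)) := by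
  have hcont : ContinuousOn (fun x => c / (x + a)) (Icc 0 b) :=
    continuousOn_const.div (by fun_prop) fun x hx => by linarith [hx.1]
  rw [← ofReal_integral_eq_lintegral_ofReal (hcont.integrableOn_Icc)
    (ae_restrict_of_forall_mem measurableSet_Icc fun x hx => by
      have := hx.1; positivity),
    integral_Icc_eq_integral_Ioc, ← intervalIntegral.integral_of_le hb]
  simp_rw [div_eq_mul_inv c]
  rw [intervalIntegral.integral_const_mul, intervalIntegral.integral_comp_add_right (·⁻¹),
    zero_add, integral_inv_of_pos ha (by linarith)]

lemma volume_sublevel_le {s : ℝ} (hs : 0 < s) :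
    volume (sublevel s) ≤ ENNReal.ofReal (16 * s * log ((1 + 2 * s) / (2 * s))) := by
  calc volume (sublevel s) = ∫⁻ x, volume (Prod.mk x ⁻¹' sublevel s) := by
        rw [Measure.volume_eq_prod, Measure.prod_apply (measurableSet_sublevel s)]
    _ ≤ ∫⁻ x, (Iic 1).indicator (fun r => ENNReal.ofReal (8 * s / (r + 2 * s))) |x| :=
        lintegral_mono (volume_slice_sublevel_le hs)
    _ ≤ 2 * ∫⁻ x in Ici 0, (Iic 1).indicator (fun r => ENNReal.ofReal (8 * s / (r + 2 * s))) x :=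
        lintegral_comp_abs_le (Measurable.indicator (by fun_prop) measurableSet_Iic)
    _ = 2 * ENNReal.ofReal (8 * s * log ((1 + 2 * s) / (2 * s))) := by
        rw [setLIntegral_indicator measurableSet_Iic, inter_comm, Ici_inter_Iic,
          lintegral_Icc_div_add (by positivity) zero_le_one (by positivity)]
    _ = ENNReal.ofReal (16 * s * log ((1 + 2 * s) / (2 * s))) := by
        rw [← ENNReal.ofReal_ofNat 2, ← ENNReal.ofReal_mul zero_le_two]
        ring_nf

lemma abs_sq_sub_sq_le_one {p : ℝ × ℝ} (hp : p ∈ square) : |p.1 ^ 2 - p.2 ^ 2| ≤ 1 := by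
  obtain ⟨hx, hy⟩ := mem_square.1 hp
  have hx2 : p.1 ^ 2 ≤ 1 := sq_le_one_iff_abs_le_one _ |>.2 (abs_le.2 hx)
  have hy2 : p.2 ^ 2 ≤ 1 := sq_le_one_iff_abs_le_one _ |>.2 (abs_le.2 hy)
  rw [abs_le]
  constructor <;> nlinarith [sq_nonneg p.1, sq_nonneg p.2]

lemma natFloor_logb_two_add_one_le {L : ℝ} (hL : 2 ≤ L) : (⌊logb 2 L⌋₊ + 1 : ℝ) ≤ 3 * log L := by
  have hlog2 : (0.6931471803 : ℝ) < log 2 := log_two_gt_d9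
  have hlogL : log 2 ≤ log L := log_le_log two_pos hL
  have hfloor : (⌊logb 2 L⌋₊ : ℝ) ≤ log L / log 2 :=
    Nat.floor_le (logb_nonneg one_lt_two (by linarith))
  have hdiv : log L / log 2 ≤ 3 / 2 * log L := by
    rw [div_le_iff₀ (by linarith)]
    nlinarith
  linarith

lemma inv_pow_mul_volume_sublevel_le {L : ℝ} (hL : 2 ≤ L) (k : ℕ) :
    ENNReal.ofReal ((2 ^ k)⁻¹) * volume (sublevel (2 ^ (k + 1) / L)) ≤
      ENNReal.ofReal (32 * log L / L) := by
  have hL0 : 0 < L := by linarith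
  set s : ℝ := 2 ^ (k + 1) / L with hs
  have hscale : (2 ^ k)⁻¹ * (16 * s) = 32 / L := by
    rw [hs, pow_succ]
    field_simp
    ring
  have hlog : log ((1 + 2 * s) / (2 * s)) ≤ log L := by
    refine log_le_log (by positivity) ?_
    have h2 : (2 : ℝ) ≤ 2 ^ (k + 1) := le_self_pow₀ one_le_two (by omega)
    rw [div_le_iff₀ (by positivity), hs]
    field_simp
    nlinarith
  calc ENNReal.ofReal ((2 ^ k)⁻¹) * volume (sublevel s)
      ≤ ENNReal.ofReal ((2 ^ k)⁻¹) * ENNReal.ofReal (16 * s * log ((1 + 2 * s) / (2 * s))) :=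
        mul_le_mul_right (volume_sublevel_le (by positivity)) _
    _ = ENNReal.ofReal (32 / L * log ((1 + 2 * s) / (2 * s))) := by
        rw [← ENNReal.ofReal_mul (by positivity), ← hscale]
        ring_nf
    _ ≤ ENNReal.ofReal (32 * log L / L) := ENNReal.ofReal_le_ofReal <| by
        rw [mul_div_right_comm]
        exact mul_le_mul_of_nonneg_left hlog (by positivity)

lemma ofReal_inv_le_sum_indicator_sublevel {L : ℝ} (hL : 2 ≤ L) {p : ℝ × ℝ} (hp : p ∈ square)
    (h1 : 1 ≤ L * |p.1 ^ 2 - p.2 ^ 2|) :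
    ENNReal.ofReal ((1 + L * |p.1 ^ 2 - p.2 ^ 2|)⁻¹) ≤
      ∑ k ∈ Finset.range (⌊logb 2 L⌋₊ + 1),
        (sublevel (2 ^ (k + 1) / L)).indicator (fun _ => ENNReal.ofReal ((2 ^ k)⁻¹)) p := by
  obtain ⟨k, hk, hk'⟩ := exists_nat_pow_near h1 one_lt_two
  have hkL : (2 : ℝ) ^ k ≤ L := hk.trans <| by
    simpa using mul_le_mul_of_nonneg_left (abs_sq_sub_sq_le_one hp) (by linarith : 0 ≤ L)
  have hkN : k < ⌊logb 2 L⌋₊ + 1 := Nat.lt_succ_of_le <| Nat.le_floor <|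
    (le_logb_iff_rpow_le one_lt_two (by linarith)).2 (by rwa [rpow_natCast])
  have hmem : p ∈ sublevel (2 ^ (k + 1) / L) := ⟨hp, by rw [le_div_iff₀' (by linarith)]; exact hk'.le⟩
  refine le_trans ?_ (Finset.single_le_sum (fun _ _ => zero_le) (Finset.mem_range.2 hkN))
  rw [indicator_of_mem hmem]
  exact ENNReal.ofReal_le_ofReal (inv_anti₀ (by positivity) (by linarith))

lemma lintegral_inv_one_add_le {L : ℝ} (hL : 2 ≤ L) :
    ∫⁻ p in {p ∈ square | 1 ≤ L * |p.1 ^ 2 - p.2 ^ 2|},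
        ENNReal.ofReal ((1 + L * |p.1 ^ 2 - p.2 ^ 2|)⁻¹) ≤
      ENNReal.ofReal (96 * log L ^ 2 / L) := by
  set N := ⌊logb 2 L⌋₊
  have hS : MeasurableSet {p ∈ square | 1 ≤ L * |p.1 ^ 2 - p.2 ^ 2|} :=
    measurableSet_Icc.inter
      (measurableSet_le (g := fun p : ℝ × ℝ => L * |p.1 ^ 2 - p.2 ^ 2|) measurable_const
        (by fun_prop))
  calc ∫⁻ p in {p ∈ square | 1 ≤ L * |p.1 ^ 2 - p.2 ^ 2|},
        ENNReal.ofReal ((1 + L * |p.1 ^ 2 - p.2 ^ 2|)⁻¹)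
      ≤ ∫⁻ p, ∑ k ∈ Finset.range (N + 1),
          (sublevel (2 ^ (k + 1) / L)).indicator (fun _ => ENNReal.ofReal ((2 ^ k)⁻¹)) p :=
        (setLIntegral_mono' hS fun p hp => ofReal_inv_le_sum_indicator_sublevel hL hp.1 hp.2).trans
          (setLIntegral_le_lintegral _ _)
    _ = ∑ k ∈ Finset.range (N + 1),
          ENNReal.ofReal ((2 ^ k)⁻¹) * volume (sublevel (2 ^ (k + 1) / L)) := by
        rw [lintegral_finsetSum _ fun k _ =>
          measurable_const.indicator (measurableSet_sublevel _)]
        simp_rw [lintegral_indicator_const (measurableSet_sublevel _)]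
    _ ≤ ∑ _k ∈ Finset.range (N + 1), ENNReal.ofReal (32 * log L / L) :=
        Finset.sum_le_sum fun k _ => inv_pow_mul_volume_sublevel_le hL k
    _ = ENNReal.ofReal ((N + 1) * (32 * log L / L)) := by
        rw [Finset.sum_const, Finset.card_range, nsmul_eq_mul,
          ENNReal.ofReal_mul (by positivity)]
        norm_cast
    _ ≤ ENNReal.ofReal (96 * log L ^ 2 / L) := ENNReal.ofReal_le_ofReal <| by
        have hlog : 0 ≤ log L := log_nonneg (by linarith)
        calc ((N : ℝ) + 1) * (32 * log L / L) ≤ 3 * log L * (32 * log L / L) :=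
              mul_le_mul_of_nonneg_right (natFloor_logb_two_add_one_le hL) (by positivity)
          _ = 96 * log L ^ 2 / L := by ring

lemma setIntegral_inv_one_add_le {L : ℝ} (hL : 2 ≤ L) :
    ∫ p in {p ∈ square | 1 ≤ L * |p.1 ^ 2 - p.2 ^ 2|}, (1 + L * |p.1 ^ 2 - p.2 ^ 2|)⁻¹ ≤
      96 * log L ^ 2 / L := by
  have hL0 : 0 ≤ L := by linarith
  rw [integral_eq_lintegral_of_nonneg_ae (ae_of_all _ fun p => by positivity) (by fun_prop)]
  exact ENNReal.toReal_le_of_le_ofReal (by positivity) (lintegral_inv_one_add_le hL)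

lemma integrableOn_square_inv_one_add {L : ℝ} (hL : 0 ≤ L) :
    IntegrableOn (fun p : ℝ × ℝ => (1 + L * |p.1 ^ 2 - p.2 ^ 2|)⁻¹) square :=
  Continuous.integrableOn_Icc (by fun_prop (disch := intro p; positivity))

end SquareDiff

theorem stmt_15 :
    ∃ C > 0, ∀ (a : ℝ × ℝ → ℝ) (M : ℝ), Measurable a → (∀ p, |a p| ≤ M) →
      ∀ L : ℝ, 2 ≤ L →
        ∫ p in {p : ℝ × ℝ | p ∈ Icc ((-1:ℝ), (-1:ℝ)) ((1:ℝ), (1:ℝ)) ∧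
            1 ≤ L * |p.1 ^ 2 - p.2 ^ 2|},
          |a p| / (1 + L * |p.1 ^ 2 - p.2 ^ 2|)
        ≤ C * M * (Real.log L) ^ 2 / L := by
  refine ⟨96, by norm_num, fun a M _ hM L hL => ?_⟩
  have hL0 : 0 ≤ L := by linarith
  have hM0 : 0 ≤ M := (abs_nonneg _).trans (hM 0)
  calc _ ≤ ∫ p in {p ∈ SquareDiff.square | 1 ≤ L * |p.1 ^ 2 - p.2 ^ 2|},
          M * (1 + L * |p.1 ^ 2 - p.2 ^ 2|)⁻¹ :=
        integral_mono_of_nonneg (ae_of_all _ fun p => by positivity)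
          (((SquareDiff.integrableOn_square_inv_one_add hL0).mono_set fun _ hp => hp.1).const_mul M)
          (ae_of_all _ fun p =>
            (div_eq_mul_inv _ _).trans_le (mul_le_mul_of_nonneg_right (hM p) (by positivity)))
    _ = M * ∫ p in {p ∈ SquareDiff.square | 1 ≤ L * |p.1 ^ 2 - p.2 ^ 2|},
          (1 + L * |p.1 ^ 2 - p.2 ^ 2|)⁻¹ := integral_const_mul M _
    _ ≤ M * (96 * log L ^ 2 / L) :=
        mul_le_mul_of_nonneg_left (SquareDiff.setIntegral_inv_one_add_le hL) hM0
    _ = 96 * M * log L ^ 2 / L := by ring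
end

section
/- Suppose there exist constants B > 0, h > 1 and an integer m ∈ {0,1} such that the Mittag-Leffler bound |E_{α,β}(iλ f(x))| ≤ B / (1 + λ|f(x)|) holds for all x ∈ U and λ ≥ 2, and the sublevel estimate |{x ∈ U : |f(x)| ≤ t}| ≤ A t^{1/h} |log t|^m holds for all t ∈ (0,1/2). Then there is C > 0 such that for every bounded measurable ψ : U → ℂ and all λ ≥ 2, |∫_U E_{α,β}(iλ f(x)) ψ(x) dx| ≤ C ‖ψ‖_∞ (log λ)^m / λ^{1/h}. -/
set_option maxHeartbeats 1000000


open MeasureTheory Real Set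

theorem stmt_16 (U : Set (ℝ × ℝ)) (hU : MeasurableSet U) (hUb : Bornology.IsBounded U)
    (f : ℝ × ℝ → ℝ) (hf : Measurable f) (E : ℂ → ℂ) (hE : Measurable E)
    (A B h : ℝ) (m : ℕ) (hA : 0 < A) (hB : 0 < B) (hh : 1 < h) (hm : m = 0 ∨ m = 1)
    (hEbound : ∀ (x : ℝ × ℝ), x ∈ U → ∀ L : ℝ, 2 ≤ L →
      ‖E (Complex.I * L * f x)‖ ≤ B / (1 + L * |f x|))
    (hsub : ∀ t ∈ Ioo (0:ℝ) (1/2),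
      (volume {x ∈ U | |f x| ≤ t}).toReal ≤ A * t ^ (1/h) * |Real.log t| ^ m) :
    ∃ C > 0, ∀ (ψ : ℝ × ℝ → ℂ) (M : ℝ), Measurable ψ → (∀ x, ‖ψ x‖ ≤ M) →
      ∀ L : ℝ, 2 ≤ L →
        ‖∫ x in U, E (Complex.I * L * f x) * ψ x‖
          ≤ C * M * (Real.log L) ^ m / L ^ (1/h) := by
  classical
  have hh0 : (0:ℝ) < h := lt_trans one_pos hh
  have hih : (0:ℝ) < 1/h := by positivity
  have hih1 : (1:ℝ)/h < 1 := by rw [div_lt_one hh0]; exact hh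
  have hUfin : volume U ≠ ⊤ := hUb.measure_lt_top.ne
  set r : ℝ := (2:ℝ) ^ ((1:ℝ)/h - 1) with hrdef
  have hr0 : 0 < r := Real.rpow_pos_of_pos two_pos _
  have hr1 : r < 1 := Real.rpow_lt_one_of_one_lt_of_neg (by norm_num) (by linarith)
  have hsumm : Summable (fun k : ℕ => ((k:ℝ)+2) * r ^ k) := by
    have h1 := summable_pow_mul_geometric_of_norm_lt_one (R := ℝ) 1
      (r := r) (by rwa [Real.norm_eq_abs, abs_of_pos hr0])
    have h2 : Summable (fun k : ℕ => (2:ℝ) * r ^ k) :=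
      (summable_geometric_of_lt_one hr0.le hr1).mul_left 2
    have h3 := h1.add h2
    refine h3.congr ?_
    intro k; simp [pow_one]; ring
  set T : ℝ := ∑' k : ℕ, ((k:ℝ)+2) * r ^ k with hT
  have hT2 : (2:ℝ) ≤ T := by
    have := Summable.le_tsum hsumm 0 (fun j _ => by positivity)
    simpa using this
  have hT0 : 0 < T := by linarith
  set μU : ℝ := (volume U).toReal with hμU
  have hμU0 : 0 ≤ μU := ENNReal.toReal_nonneg
  set C₁ : ℝ := A + 2*μU + 1 with hC₁
  have hC₁0 : 0 < C₁ := by rw [hC₁]; linarith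
  have hlog2 : 0 < Real.log 2 := Real.log_pos (by norm_num)
  set c₂ : ℝ := 1 + 1/Real.log 2 with hc₂
  have hc₂1 : 1 ≤ c₂ := by
    have h12 : 0 < 1/Real.log 2 := by positivity
    rw [hc₂]; linarith
  have h2h : (0:ℝ) < (2:ℝ) ^ ((1:ℝ)/h) := Real.rpow_pos_of_pos two_pos _
  have h1aT : (0:ℝ) < 1 + (2:ℝ) ^ ((1:ℝ)/h) * T := by nlinarith
  -- master sublevel estimate
  have hmaster : ∀ u : ℝ, 0 < u →
      volume {x ∈ U | |f x| ≤ u} ≤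
        ENNReal.ofReal (C₁ * u ^ ((1:ℝ)/h) * (1 + |Real.log u|) ^ m) := by
    intro u hu
    have hsubU : {x ∈ U | |f x| ≤ u} ⊆ U := sep_subset _ _
    have hfin : volume {x ∈ U | |f x| ≤ u} ≠ ⊤ :=
      (lt_of_le_of_lt (measure_mono hsubU) hUb.measure_lt_top).ne
    have hu0 : 0 < u ^ ((1:ℝ)/h) := Real.rpow_pos_of_pos hu _
    have hpow1 : (1:ℝ) ≤ (1 + |Real.log u|) ^ m := by
      calc (1:ℝ) = 1 ^ m := (one_pow m).symm
        _ ≤ (1 + |Real.log u|) ^ m :=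
          pow_le_pow_left₀ (by norm_num) (by linarith [abs_nonneg (Real.log u)]) m
    rcases lt_or_ge u (1/2) with hu2 | hu2
    · rw [← ENNReal.ofReal_toReal hfin]
      apply ENNReal.ofReal_le_ofReal
      calc (volume {x ∈ U | |f x| ≤ u}).toReal
          ≤ A * u ^ ((1:ℝ)/h) * |Real.log u| ^ m := hsub u ⟨hu, hu2⟩
        _ ≤ C₁ * u ^ ((1:ℝ)/h) * (1 + |Real.log u|) ^ m := by
            have hA1 : A ≤ C₁ := by rw [hC₁]; linarith
            have h6 : |Real.log u| ^ m ≤ (1 + |Real.log u|) ^ m :=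
              pow_le_pow_left₀ (abs_nonneg _) (by linarith [abs_nonneg (Real.log u)]) m
            have := mul_le_mul (mul_le_mul hA1 (le_refl (u ^ ((1:ℝ)/h))) hu0.le hC₁0.le)
              h6 (by positivity) (by positivity)
            exact this
    · have h1 : (1:ℝ)/2 ≤ u ^ ((1:ℝ)/h) := by
        have ha : ((1:ℝ)/2) ^ ((1:ℝ)/h) ≤ u ^ ((1:ℝ)/h) :=
          Real.rpow_le_rpow (by norm_num) hu2 hih.le
        have hb2 : ((1:ℝ)/2) ≤ ((1:ℝ)/2) ^ ((1:ℝ)/h) := by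
          have := Real.rpow_le_rpow_of_exponent_ge (x := (1:ℝ)/2)
            (by norm_num) (by norm_num) hih1.le
          simpa using this
        linarith
      calc volume {x ∈ U | |f x| ≤ u} ≤ volume U := measure_mono hsubU
        _ = ENNReal.ofReal μU := (ENNReal.ofReal_toReal hUfin).symm
        _ ≤ ENNReal.ofReal (C₁ * u ^ ((1:ℝ)/h) * (1 + |Real.log u|) ^ m) := by
            apply ENNReal.ofReal_le_ofReal
            have e1 : C₁ * u ^ ((1:ℝ)/h) ≥ μU := by nlinarith
            nlinarith [mul_nonneg (mul_nonneg hC₁0.le hu0.le)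
              (sub_nonneg.mpr hpow1)]
  refine ⟨B * C₁ * (1 + (2:ℝ) ^ ((1:ℝ)/h) * T) * c₂, by positivity, ?_⟩
  intro ψ M hψ hψM L hL
  have hL0 : (0:ℝ) < L := by linarith
  have hM0 : (0:ℝ) ≤ M := le_trans (norm_nonneg _) (hψM 0)
  have hlogL : Real.log 2 ≤ Real.log L := Real.log_le_log two_pos hL
  have hlogL0 : 0 < Real.log L := lt_of_lt_of_le hlog2 hlogL
  have hLh : 0 < L ^ ((1:ℝ)/h) := Real.rpow_pos_of_pos hL0 _
  have hLh' : L ^ ((1:ℝ)/h) ≠ 0 := ne_of_gt hLh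
  set P : ℝ := B * M * C₁ * (1 + Real.log L) ^ m / L ^ ((1:ℝ)/h) with hP
  have hP0 : 0 ≤ P := by
    rw [hP]
    apply div_nonneg _ hLh.le
    exact mul_nonneg (mul_nonneg (mul_nonneg hB.le hM0) hC₁0.le) (by positivity)
  -- dyadic pieces
  set S : ℕ → Set (ℝ × ℝ) := fun k =>
    if k = 0 then {x ∈ U | |f x| ≤ 1/L}
    else {x ∈ U | (2:ℝ)^(k-1)/L < |f x| ∧ |f x| ≤ (2:ℝ)^k/L} with hSdef
  have hS0 : S 0 = {x ∈ U | |f x| ≤ 1/L} := by simp [hSdef]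
  have hSk : ∀ k : ℕ, S (k+1) =
      {x ∈ U | (2:ℝ)^k/L < |f x| ∧ |f x| ≤ (2:ℝ)^(k+1)/L} := by
    intro k; simp [hSdef]
  have hcov : U ⊆ ⋃ k, S k := by
    intro x hx
    rcases le_or_gt (|f x|) (1/L) with hx0 | hx0
    · exact mem_iUnion.2 ⟨0, by rw [hS0]; exact ⟨hx, hx0⟩⟩
    · have hex : ∃ n : ℕ, |f x| ≤ (2:ℝ)^n / L := by
        obtain ⟨n, hn⟩ := pow_unbounded_of_one_lt (L * |f x|) (by norm_num : (1:ℝ) < 2)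
        refine ⟨n, ?_⟩
        rw [le_div_iff₀ hL0]
        nlinarith
      have hn1 : |f x| ≤ (2:ℝ)^(Nat.find hex) / L := Nat.find_spec hex
      have hne : Nat.find hex ≠ 0 := by
        intro h0
        rw [h0] at hn1
        simp only [pow_zero] at hn1
        linarith
      obtain ⟨k, hkn⟩ := Nat.exists_eq_succ_of_ne_zero hne
      have hmin := Nat.find_min hex (m := k) (by omega)
      refine mem_iUnion.2 ⟨k+1, ?_⟩
      rw [hSk]
      refine ⟨hx, lt_of_not_ge hmin, ?_⟩
      rw [hkn] at hn1
      exact hn1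
  have hSmeas : ∀ k, MeasurableSet (S k) := by
    intro k
    rcases k with _ | k
    · rw [hS0]
      exact hU.inter (measurableSet_le hf.abs measurable_const)
    · rw [hSk]
      exact hU.inter ((measurableSet_lt measurable_const hf.abs).inter
        (measurableSet_le hf.abs measurable_const))
  have hpiece : ∀ (s : Set (ℝ × ℝ)) (c : ℝ), MeasurableSet s →
      (∀ x ∈ s, ‖E (Complex.I * L * f x) * ψ x‖ ≤ c) →
      ∫⁻ x in s, ENNReal.ofReal ‖E (Complex.I * L * f x) * ψ x‖ ∂volume
        ≤ ENNReal.ofReal c * volume s := by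
    intro s c hs hb
    calc ∫⁻ x in s, ENNReal.ofReal ‖E (Complex.I * L * f x) * ψ x‖ ∂volume
        ≤ ∫⁻ _x in s, ENNReal.ofReal c ∂volume :=
          setLIntegral_mono' hs (fun x hxs => ENNReal.ofReal_le_ofReal (hb x hxs))
      _ = ENNReal.ofReal c * volume s := setLIntegral_const s _
  have hnorm : ∀ x ∈ U, ‖E (Complex.I * L * f x) * ψ x‖ ≤ (B / (1 + L * |f x|)) * M := by
    intro x hx
    rw [norm_mul]
    have hd : (0:ℝ) < 1 + L * |f x| := by nlinarith [abs_nonneg (f x)]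
    exact mul_le_mul (hEbound x hx L hL) (hψM x) (norm_nonneg _)
      (div_nonneg hB.le hd.le)
  have hS0le : ∫⁻ x in S 0, ENNReal.ofReal ‖E (Complex.I * L * f x) * ψ x‖ ∂volume
      ≤ ENNReal.ofReal P := by
    have hb : ∀ x ∈ S 0, ‖E (Complex.I * L * f x) * ψ x‖ ≤ B * M := by
      intro x hxs
      rw [hS0] at hxs
      have h1 := hnorm x hxs.1
      have hd : (1:ℝ) ≤ 1 + L * |f x| := by nlinarith [abs_nonneg (f x)]
      have h2 : B / (1 + L * |f x|) ≤ B := div_le_self hB.le hd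
      calc ‖E (Complex.I * L * f x) * ψ x‖ ≤ (B / (1 + L * |f x|)) * M := h1
        _ ≤ B * M := mul_le_mul_of_nonneg_right h2 hM0
    calc ∫⁻ x in S 0, ENNReal.ofReal ‖E (Complex.I * L * f x) * ψ x‖ ∂volume
        ≤ ENNReal.ofReal (B*M) * volume (S 0) := hpiece _ _ (hSmeas 0) hb
      _ ≤ ENNReal.ofReal (B*M) *
          ENNReal.ofReal (C₁ * ((1:ℝ)/L) ^ ((1:ℝ)/h) * (1 + |Real.log (1/L)|) ^ m) := by
          gcongr
          rw [hS0]
          exact hmaster (1/L) (by positivity)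
      _ = ENNReal.ofReal (B*M * (C₁ * ((1:ℝ)/L) ^ ((1:ℝ)/h) * (1 + |Real.log (1/L)|) ^ m)) :=
          (ENNReal.ofReal_mul (by positivity)).symm
      _ ≤ ENNReal.ofReal P := by
          apply ENNReal.ofReal_le_ofReal
          have e1 : ((1:ℝ)/L) ^ ((1:ℝ)/h) = 1 / L ^ ((1:ℝ)/h) := by
            simp only [one_div, Real.inv_rpow hL0.le]
          have e2 : |Real.log (1/L)| = Real.log L := by
            rw [one_div, Real.log_inv, abs_neg, abs_of_pos hlogL0]
          rw [e1, e2, hP]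
          apply le_of_eq
          field_simp
  have hSkle : ∀ k : ℕ,
      ∫⁻ x in S (k+1), ENNReal.ofReal ‖E (Complex.I * L * f x) * ψ x‖ ∂volume
      ≤ ENNReal.ofReal (P * (2:ℝ) ^ ((1:ℝ)/h) * (((k:ℝ)+2) * r ^ k)) := by
    intro k
    have h2k : (0:ℝ) < (2:ℝ)^k := by positivity
    have h2k' : ((2:ℝ)^k) ≠ 0 := h2k.ne'
    have hb : ∀ x ∈ S (k+1), ‖E (Complex.I * L * f x) * ψ x‖ ≤ (B / 2^k) * M := by
      intro x hxs
      rw [hSk] at hxs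
      obtain ⟨hxU, hlt, _hle⟩ := hxs
      have h1 := hnorm x hxU
      have hd : (2:ℝ)^k ≤ 1 + L * |f x| := by
        rw [div_lt_iff₀ hL0] at hlt
        nlinarith
      have h2 : B / (1 + L * |f x|) ≤ B / 2^k := by
        gcongr
      exact le_trans h1 (mul_le_mul_of_nonneg_right h2 hM0)
    have hu : (0:ℝ) < (2:ℝ)^(k+1)/L := by positivity
    have eA : ((2:ℝ)^(k+1)) ^ ((1:ℝ)/h) = (2:ℝ)^k * (2:ℝ) ^ ((1:ℝ)/h) * r ^ k := by
      rw [← Real.rpow_natCast (2:ℝ) (k+1), ← Real.rpow_mul (by norm_num : (0:ℝ) ≤ 2),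
          ← Real.rpow_natCast (2:ℝ) k, ← Real.rpow_natCast r k, hrdef,
          ← Real.rpow_mul (by norm_num : (0:ℝ) ≤ 2),
          ← Real.rpow_add two_pos, ← Real.rpow_add two_pos]
      congr 1
      push_cast
      ring
    have eB : ((2:ℝ)^(k+1)/L) ^ ((1:ℝ)/h)
        = (2:ℝ)^k * (2:ℝ) ^ ((1:ℝ)/h) * r ^ k / L ^ ((1:ℝ)/h) := by
      rw [Real.div_rpow (by positivity) hL0.le, eA]
    have hlogu : (1 + |Real.log ((2:ℝ)^(k+1)/L)|) ^ m
        ≤ ((k:ℝ)+2) * (1 + Real.log L) ^ m := by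
      have e3 : Real.log ((2:ℝ)^(k+1)/L) = ((k:ℝ)+1) * Real.log 2 - Real.log L := by
        rw [Real.log_div (by positivity) hL0.ne', Real.log_pow]
        push_cast
        ring
      have hk0 : (0:ℝ) ≤ (k:ℝ) := Nat.cast_nonneg k
      have hk1 : (0:ℝ) ≤ ((k:ℝ)+1) * Real.log 2 := by positivity
      have habs : |Real.log ((2:ℝ)^(k+1)/L)| ≤ ((k:ℝ)+1) * Real.log 2 + Real.log L := by
        rw [e3]
        rw [abs_le]
        constructor <;> nlinarith
      have hlog21 : Real.log 2 ≤ 1 := by nlinarith [Real.log_le_sub_one_of_pos (by norm_num : (0:ℝ) < 2)]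
      have h4 : 1 + |Real.log ((2:ℝ)^(k+1)/L)| ≤ ((k:ℝ)+2) * (1 + Real.log L) := by
        nlinarith [mul_le_mul_of_nonneg_left hlog21 (by positivity : (0:ℝ) ≤ (k:ℝ)+1),
          mul_nonneg (by positivity : (0:ℝ) ≤ (k:ℝ)+1) hlogL0.le]
      calc (1 + |Real.log ((2:ℝ)^(k+1)/L)|) ^ m
          ≤ (((k:ℝ)+2) * (1 + Real.log L)) ^ m :=
            pow_le_pow_left₀ (by positivity) h4 m
        _ = ((k:ℝ)+2)^m * (1 + Real.log L)^m := mul_pow _ _ m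
        _ ≤ ((k:ℝ)+2) * (1 + Real.log L)^m := by
            have hkm : ((k:ℝ)+2)^m ≤ (k:ℝ)+2 := by
              rcases hm with hm | hm <;> subst hm
              · simp; linarith
              · simp
            exact mul_le_mul_of_nonneg_right hkm (by positivity)
    have hreal : (B/2^k)*M * (C₁ * ((2:ℝ)^(k+1)/L) ^ ((1:ℝ)/h)
          * (1 + |Real.log ((2:ℝ)^(k+1)/L)|) ^ m)
        ≤ P * (2:ℝ) ^ ((1:ℝ)/h) * (((k:ℝ)+2) * r ^ k) := by
      rw [eB]
      have hQ : (0:ℝ) ≤ B*M*C₁*(2:ℝ)^((1:ℝ)/h)*r^k / L^((1:ℝ)/h) := by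
        apply div_nonneg _ hLh.le
        exact mul_nonneg (mul_nonneg (mul_nonneg (mul_nonneg hB.le hM0) hC₁0.le) h2h.le)
          (by positivity)
      calc (B/2^k)*M * (C₁ * ((2:ℝ)^k * (2:ℝ) ^ ((1:ℝ)/h) * r ^ k / L ^ ((1:ℝ)/h))
            * (1 + |Real.log ((2:ℝ)^(k+1)/L)|) ^ m)
          = (B*M*C₁*(2:ℝ)^((1:ℝ)/h)*r^k / L^((1:ℝ)/h))
              * (1 + |Real.log ((2:ℝ)^(k+1)/L)|) ^ m := by
            field_simp
        _ ≤ (B*M*C₁*(2:ℝ)^((1:ℝ)/h)*r^k / L^((1:ℝ)/h))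
              * (((k:ℝ)+2) * (1 + Real.log L)^m) :=
            mul_le_mul_of_nonneg_left hlogu hQ
        _ = P * (2:ℝ) ^ ((1:ℝ)/h) * (((k:ℝ)+2) * r ^ k) := by
            rw [hP]
            field_simp
    calc ∫⁻ x in S (k+1), ENNReal.ofReal ‖E (Complex.I * L * f x) * ψ x‖ ∂volume
        ≤ ENNReal.ofReal ((B/2^k)*M) * volume (S (k+1)) := hpiece _ _ (hSmeas _) hb
      _ ≤ ENNReal.ofReal ((B/2^k)*M) *
          ENNReal.ofReal (C₁ * ((2:ℝ)^(k+1)/L) ^ ((1:ℝ)/h)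
            * (1 + |Real.log ((2:ℝ)^(k+1)/L)|) ^ m) := by
          gcongr
          refine le_trans (measure_mono ?_) (hmaster ((2:ℝ)^(k+1)/L) hu)
          rw [hSk]
          intro x hx
          exact ⟨hx.1, hx.2.2⟩
      _ = ENNReal.ofReal ((B/2^k)*M * (C₁ * ((2:ℝ)^(k+1)/L) ^ ((1:ℝ)/h)
            * (1 + |Real.log ((2:ℝ)^(k+1)/L)|) ^ m)) :=
          (ENNReal.ofReal_mul (by positivity)).symm
      _ ≤ ENNReal.ofReal (P * (2:ℝ) ^ ((1:ℝ)/h) * (((k:ℝ)+2) * r ^ k)) :=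
          ENNReal.ofReal_le_ofReal hreal
  -- final real inequality
  have hq : (1 + Real.log L)^m ≤ c₂ * (Real.log L)^m := by
    have h5 : 1 + Real.log L ≤ c₂ * Real.log L := by
      have h6 : 1 ≤ Real.log L / Real.log 2 := by
        rw [le_div_iff₀ hlog2]; linarith
      rw [hc₂]
      have : (1 + 1/Real.log 2) * Real.log L = Real.log L + Real.log L / Real.log 2 := by
        field_simp
      rw [this]
      linarith
    calc (1 + Real.log L)^m ≤ (c₂ * Real.log L)^m :=
        pow_le_pow_left₀ (by linarith) h5 m
      _ = c₂^m * (Real.log L)^m := mul_pow _ _ m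
      _ ≤ c₂ * (Real.log L)^m := by
          have hcm : c₂^m ≤ c₂ := by
            rcases hm with hm | hm <;> subst hm
            · simpa using hc₂1
            · simp
          exact mul_le_mul_of_nonneg_right hcm (by positivity)
  have hfinal : P + P * (2:ℝ) ^ ((1:ℝ)/h) * T
      ≤ B * C₁ * (1 + (2:ℝ) ^ ((1:ℝ)/h) * T) * c₂ * M * (Real.log L)^m / L ^ ((1:ℝ)/h) := by
    rw [hP]
    have e4 : B*M*C₁*(1 + Real.log L)^m / L^((1:ℝ)/h)
          + B*M*C₁*(1 + Real.log L)^m / L^((1:ℝ)/h) * (2:ℝ)^((1:ℝ)/h) * T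
        = (B*M*C₁*(1 + (2:ℝ)^((1:ℝ)/h)*T)) * (1 + Real.log L)^m / L^((1:ℝ)/h) := by
      field_simp
    have hQ2 : (0:ℝ) ≤ B*M*C₁*(1 + (2:ℝ)^((1:ℝ)/h)*T) :=
      mul_nonneg (mul_nonneg (mul_nonneg hB.le hM0) hC₁0.le) h1aT.le
    rw [e4]
    refine (div_le_div_iff_of_pos_right hLh).mpr ?_
    calc (B*M*C₁*(1 + (2:ℝ)^((1:ℝ)/h)*T)) * (1 + Real.log L)^m
        ≤ (B*M*C₁*(1 + (2:ℝ)^((1:ℝ)/h)*T)) * (c₂ * (Real.log L)^m) :=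
          mul_le_mul_of_nonneg_left hq hQ2
      _ = B * C₁ * (1 + (2:ℝ) ^ ((1:ℝ)/h) * T) * c₂ * M * (Real.log L)^m := by ring
  have hPaT0 : (0:ℝ) ≤ P * (2:ℝ)^((1:ℝ)/h) * T :=
    mul_nonneg (mul_nonneg hP0 h2h.le) hT0.le
  have hRHS0 : (0:ℝ) ≤ B * C₁ * (1 + (2:ℝ) ^ ((1:ℝ)/h) * T) * c₂ * M
      * (Real.log L)^m / L ^ ((1:ℝ)/h) := by
    apply div_nonneg _ hLh.le
    exact mul_nonneg (mul_nonneg (mul_nonneg (mul_nonneg (mul_nonneg hB.le hC₁0.le)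
      h1aT.le) (by linarith)) hM0) (by positivity)
  have hkey : ∫⁻ x in U, ENNReal.ofReal ‖E (Complex.I * L * f x) * ψ x‖ ∂volume
      ≤ ENNReal.ofReal (B * C₁ * (1 + (2:ℝ) ^ ((1:ℝ)/h) * T) * c₂ * M
          * (Real.log L)^m / L ^ ((1:ℝ)/h)) := by
    have hsummb : Summable (fun k : ℕ => P * (2:ℝ) ^ ((1:ℝ)/h) * (((k:ℝ)+2) * r ^ k)) :=
      hsumm.mul_left _
    have hnn : ∀ k : ℕ, (0:ℝ) ≤ P * (2:ℝ) ^ ((1:ℝ)/h) * (((k:ℝ)+2) * r ^ k) :=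
      fun k => mul_nonneg (mul_nonneg hP0 h2h.le) (by positivity)
    have htsum : (∑' k : ℕ, P * (2:ℝ) ^ ((1:ℝ)/h) * (((k:ℝ)+2) * r ^ k))
        = P * (2:ℝ) ^ ((1:ℝ)/h) * T := by
      rw [hT]; exact tsum_mul_left
    calc ∫⁻ x in U, ENNReal.ofReal ‖E (Complex.I * L * f x) * ψ x‖ ∂volume
        ≤ ∫⁻ x in ⋃ k, S k, ENNReal.ofReal ‖E (Complex.I * L * f x) * ψ x‖ ∂volume :=
          lintegral_mono_set hcov
      _ ≤ ∑' k, ∫⁻ x in S k, ENNReal.ofReal ‖E (Complex.I * L * f x) * ψ x‖ ∂volume :=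
          lintegral_iUnion_le _ _
      _ = (∫⁻ x in S 0, ENNReal.ofReal ‖E (Complex.I * L * f x) * ψ x‖ ∂volume)
          + ∑' k, ∫⁻ x in S (k+1), ENNReal.ofReal ‖E (Complex.I * L * f x) * ψ x‖ ∂volume :=
          tsum_eq_zero_add' ENNReal.summable
      _ ≤ ENNReal.ofReal P
          + ∑' k : ℕ, ENNReal.ofReal (P * (2:ℝ) ^ ((1:ℝ)/h) * (((k:ℝ)+2) * r ^ k)) :=
          add_le_add hS0le (ENNReal.tsum_le_tsum hSkle)
      _ = ENNReal.ofReal (P + P * (2:ℝ) ^ ((1:ℝ)/h) * T) := by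
          rw [← ENNReal.ofReal_tsum_of_nonneg hnn hsummb, htsum,
            ← ENNReal.ofReal_add hP0 hPaT0]
      _ ≤ ENNReal.ofReal (B * C₁ * (1 + (2:ℝ) ^ ((1:ℝ)/h) * T) * c₂ * M
          * (Real.log L)^m / L ^ ((1:ℝ)/h)) := ENNReal.ofReal_le_ofReal hfinal
  calc ‖∫ x in U, E (Complex.I * L * f x) * ψ x‖
      ≤ (∫⁻ x in U, ENNReal.ofReal ‖E (Complex.I * L * f x) * ψ x‖ ∂volume).toReal :=
        norm_integral_le_lintegral_norm _
    _ ≤ B * C₁ * (1 + (2:ℝ) ^ ((1:ℝ)/h) * T) * c₂ * M * (Real.log L)^m / L ^ ((1:ℝ)/h) :=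
        ENNReal.toReal_le_of_le_ofReal hRHS0 hkey
end
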